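/- arXiv:1609.02383 — 7 statements merged into one kernel-verified Lean document; each statement's English description precedes it below -/
import Mathlib

section
/- Let Ω ⊆ ℝ^n be a convex set, let ψ : ℝ^n → ℝ be differentiable with gradient ∇ψ, let g, y ∈ ℝ^n, and let x* ∈ Ω be a minimizer over Ω of the map x ↦ ⟨g, x⟩ + B_ψ(x, y). Then for every z ∈ Ω, ⟨x* − z, g⟩ ≤ B_ψ(z, y) − B_ψ(z, x*) − B_ψ(x*, y). -/
/-! At the minimizer `xs`, the first-order optimality condition over the convex set `Ω` gives
`0 ≤ ⟪g + (Dψ xs - Dψ y), z - xs⟫`, and the three-point identity of Bregman divergences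
rewrites `B(z, y) - B(z, xs) - B(xs, y)` as `⟪Dψ xs - Dψ y, z - xs⟫`. -/

open scoped RealInnerProductSpace
open Finset

noncomputable def breg {n : ℕ} (ψ : EuclideanSpace ℝ (Fin n) → ℝ)
    (Dψ : EuclideanSpace ℝ (Fin n) → EuclideanSpace ℝ (Fin n))
    (x y : EuclideanSpace ℝ (Fin n)) : ℝ :=
  ψ x - ψ y - ⟪Dψ y, x - y⟫

theorem IsMinOn.inner_gradient_sub_nonneg {E : Type*} [NormedAddCommGroup E]
    [InnerProductSpace ℝ E] [CompleteSpace E] {f : E → ℝ} {s : Set E} {a G z : E}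
    (hs : Convex ℝ s) (ha : a ∈ s) (h : IsMinOn f s a) (hf : HasGradientAt f G a)
    (hz : z ∈ s) : 0 ≤ ⟪G, z - a⟫ := by
  have hdir : z - a ∈ posTangentConeAt s a :=
    sub_mem_posTangentConeAt_of_segment_subset (hs.segment_subset ha hz)
  simpa using h.localize.hasFDerivWithinAt_nonneg
    (hasGradientAt_iff_hasFDerivAt.mp hf).hasFDerivWithinAt hdir

theorem hasGradientAt_inner_add_breg {n : ℕ} {ψ : EuclideanSpace ℝ (Fin n) → ℝ}
    {Dψ : EuclideanSpace ℝ (Fin n) → EuclideanSpace ℝ (Fin n)}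
    {g x : EuclideanSpace ℝ (Fin n)} (hψ : HasGradientAt ψ (Dψ x) x)
    (y : EuclideanSpace ℝ (Fin n)) :
    HasGradientAt (fun x => ⟪g, x⟫ + breg ψ Dψ x y) (g + (Dψ x - Dψ y)) x := by
  have hfun : (fun x => ⟪g, x⟫ + breg ψ Dψ x y)
      = fun x => ψ x + (⟪g - Dψ y, x⟫ + (⟪Dψ y, y⟫ - ψ y)) := by
    funext x
    simp only [breg, inner_sub_left, inner_sub_right]
    ring
  have hlin := ((InnerProductSpace.toDual ℝ _ (g - Dψ y)).hasFDerivAt (x := x)).add_const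
    (⟪Dψ y, y⟫ - ψ y)
  rw [hfun, hasGradientAt_iff_hasFDerivAt]
  refine ((hasGradientAt_iff_hasFDerivAt.mp hψ).add hlin).congr_fderiv ?_
  rw [← map_add]
  congr 1
  abel

theorem breg_three_point {n : ℕ} (ψ : EuclideanSpace ℝ (Fin n) → ℝ)
    (Dψ : EuclideanSpace ℝ (Fin n) → EuclideanSpace ℝ (Fin n))
    (x y z : EuclideanSpace ℝ (Fin n)) :
    breg ψ Dψ z y - breg ψ Dψ z x - breg ψ Dψ x y = ⟪Dψ x - Dψ y, z - x⟫ := by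
  simp only [breg, inner_sub_left, inner_sub_right]
  ring

theorem stmt_1 {n : ℕ} (Ω : Set (EuclideanSpace ℝ (Fin n))) (hΩ : Convex ℝ Ω)
    (ψ : EuclideanSpace ℝ (Fin n) → ℝ)
    (Dψ : EuclideanSpace ℝ (Fin n) → EuclideanSpace ℝ (Fin n))
    (hdiff : ∀ z, HasGradientAt ψ (Dψ z) z)
    (g y xs : EuclideanSpace ℝ (Fin n)) (hxs : xs ∈ Ω)
    (hmin : IsMinOn (fun x => ⟪g, x⟫ + breg ψ Dψ x y) Ω xs) :
    ∀ z ∈ Ω, ⟪xs - z, g⟫ ≤ breg ψ Dψ z y - breg ψ Dψ z xs - breg ψ Dψ xs y := by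
  intro z hz
  have hopt := hmin.inner_gradient_sub_nonneg hΩ hxs
    (hasGradientAt_inner_add_breg (hdiff xs) y) hz
  rw [breg_three_point, ← neg_sub z xs, inner_neg_left, real_inner_comm]
  rw [inner_add_left] at hopt
  linarith
end

section
/- Let Ω ⊆ ℝ^n be a convex set, T ≥ 1, η > 0, and let ψ : ℝ^n → ℝ be differentiable and satisfy B_ψ(x,y) ≥ (1/2)‖x−y‖² (Euclidean norm) for all x, y ∈ Ω. Let f_1, …, f_T : ℝ^n → ℝ, x_1, …, x_{T+1} ∈ Ω, x̂_1, …, x̂_T ∈ Ω, and g_t, g̃_t ∈ ℝ^n be such that for each t: g_t is a subgradient of f_t at x̂_t over Ω, x̂_t is a minimizer over Ω of x ↦ ⟨g̃_t, x⟩ + (1/η)B_ψ(x, x_t), and x_{t+1} is a minimizer over Ω of x ↦ ⟨g_t, x⟩ + (1/η)B_ψ(x, x_t). Let x* ∈ Ω and M ∈ ℝ satisfy B_ψ(x*, x) − B_ψ(x*, y) ≤ M for all x, y ∈ Ω. Then ∑_{t=1}^T (f_t(x̂_t) − f_t(x*)) ≤ (η/2)∑_{t=1}^T ‖g_t − g̃_t‖²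 + M/η. Moreover, if additionally ∑_{t=1}^T ‖g_t − g̃_t‖² ≤ Q̄ for some Q̄ > 0, M > 0, and η = sqrt(2M/Q̄), then ∑_{t=1}^T (f_t(x̂_t) − f_t(x*)) ≤ sqrt(2 M Q̄). -/
open scoped RealInnerProductSpace
open Finset

/-
Each round is controlled by the three-point inequality of a Bregman proximal step: the first-order
optimality condition of `z ↦ ⟪c, z⟫ + B(z, y) / η` on the convex set `Ω` at its minimiser `w` gives
`⟪c, w - u⟫ ≤ (B(u, y) - B(u, w) - B(w, y)) / η` for every `u ∈ Ω`. Applying it to the optimistic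
step `x̂ₜ` (tested against `xₜ₊₁`) and to the update `xₜ₊₁` (tested against `x*`), and absorbing
`⟪gₜ - g̃ₜ, x̂ₜ - xₜ₊₁⟫` by Young's inequality and the strong convexity
`B(xₜ₊₁, x̂ₜ) ≥ ½‖xₜ₊₁ - x̂ₜ‖²`, bounds the linearised regret `⟪gₜ, x̂ₜ - x*⟫` by
`η/2 ‖gₜ - g̃ₜ‖² + (B(x*, xₜ) - B(x*, xₜ₊₁)) / η`. The Bregman terms telescope to at most `M / η`,
and `η = √(2M/Q̄)` balances the two contributions.
-/

theorem IsMinOn.hasFDerivAt_apply_sub_nonneg {E : Type*} [NormedAddCommGroup E]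
    [NormedSpace ℝ E] {F : E → ℝ} {F' : E →L[ℝ] ℝ} {Ω : Set E} {w u : E}
    (hmin : IsMinOn F Ω w) (hF : HasFDerivAt F F' w) (hΩ : Convex ℝ Ω) (hw : w ∈ Ω)
    (hu : u ∈ Ω) : 0 ≤ F' (u - w) :=
  hmin.localize.hasFDerivWithinAt_nonneg hF.hasFDerivWithinAt
    (sub_mem_posTangentConeAt_of_segment_subset (hΩ.segment_subset hw hu))

theorem real_inner_le_mul_norm_sq_add {E : Type*} [NormedAddCommGroup E]
    [InnerProductSpace ℝ E] {η : ℝ} (hη : 0 < η) (a b : E) :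
    ⟪a, b⟫ ≤ η / 2 * ‖a‖ ^ 2 + 1 / (2 * η) * ‖b‖ ^ 2 := by
  have hsq : 0 ≤ (η * ‖a‖ - ‖b‖) ^ 2 / (2 * η) := by positivity
  have hexp : (η * ‖a‖ - ‖b‖) ^ 2 / (2 * η)
      = η / 2 * ‖a‖ ^ 2 + 1 / (2 * η) * ‖b‖ ^ 2 - ‖a‖ * ‖b‖ := by
    field_simp
    ring
  linarith [real_inner_le_norm a b]

section Bregman

variable {n : ℕ} {ψ : EuclideanSpace ℝ (Fin n) → ℝ}
  {Dψ : EuclideanSpace ℝ (Fin n) → EuclideanSpace ℝ (Fin n)}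

theorem breg_sub_breg_sub_breg (u w y : EuclideanSpace ℝ (Fin n)) :
    breg ψ Dψ u y - breg ψ Dψ u w - breg ψ Dψ w y = ⟪Dψ w - Dψ y, u - w⟫ := by
  simp only [breg, inner_sub_left, inner_sub_right]
  ring

theorem hasFDerivAt_breg_left (hψ : ∀ z, HasGradientAt ψ (Dψ z) z)
    (y w : EuclideanSpace ℝ (Fin n)) :
    HasFDerivAt (fun z => breg ψ Dψ z y)
      (InnerProductSpace.toDual ℝ _ (Dψ w) - innerSL ℝ (Dψ y)) w :=
  ((hψ w).hasFDerivAt.sub_const (ψ y)).sub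
    ((innerSL ℝ (Dψ y)).hasFDerivAt.comp w ((hasFDerivAt_id w).sub_const y))

theorem IsMinOn.inner_sub_le_breg (hψ : ∀ z, HasGradientAt ψ (Dψ z) z)
    {Ω : Set (EuclideanSpace ℝ (Fin n))} (hΩ : Convex ℝ Ω) {η : ℝ}
    {c y w u : EuclideanSpace ℝ (Fin n)}
    (hmin : IsMinOn (fun z => ⟪c, z⟫ + (1/η) * breg ψ Dψ z y) Ω w) (hw : w ∈ Ω) (hu : u ∈ Ω) :
    ⟪c, w - u⟫ ≤ (1/η) * (breg ψ Dψ u y - breg ψ Dψ u w - breg ψ Dψ w y) := by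
  have hF := ((innerSL ℝ c).hasFDerivAt (x := w)).add
    ((hasFDerivAt_breg_left hψ y w).const_mul (1/η))
  have h := hmin.hasFDerivAt_apply_sub_nonneg hF hΩ hw hu
  simp only [one_div, add_apply, coe_innerSL_apply, smul_apply, sub_apply,
    InnerProductSpace.toDual_apply_apply, smul_eq_mul] at h
  rw [breg_sub_breg_sub_breg, ← neg_sub u w, inner_neg_right, inner_sub_left, one_div]
  linarith

theorem inner_sub_le_of_optimistic_step (hψ : ∀ z, HasGradientAt ψ (Dψ z) z)
    {Ω : Set (EuclideanSpace ℝ (Fin n))} (hΩ : Convex ℝ Ω) {η : ℝ} (hη : 0 < η)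
    (hstrong : ∀ x ∈ Ω, ∀ y ∈ Ω, (1/2) * ‖x - y‖^2 ≤ breg ψ Dψ x y)
    {g g' y xhat ynext u : EuclideanSpace ℝ (Fin n)}
    (hy : y ∈ Ω) (hxhat : xhat ∈ Ω) (hynext : ynext ∈ Ω) (hu : u ∈ Ω)
    (hhat : IsMinOn (fun z => ⟪g', z⟫ + (1/η) * breg ψ Dψ z y) Ω xhat)
    (hnext : IsMinOn (fun z => ⟪g, z⟫ + (1/η) * breg ψ Dψ z y) Ω ynext) :
    ⟪g, xhat - u⟫ ≤ η / 2 * ‖g - g'‖ ^ 2 + (breg ψ Dψ u y - breg ψ Dψ u ynext) / η := by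
  have hsplit : ⟪g, xhat - u⟫ = ⟪g - g', xhat - ynext⟫ + ⟪g', xhat - ynext⟫ + ⟪g, ynext - u⟫ := by
    simp only [inner_sub_left, inner_sub_right]
    ring
  have hyoung := real_inner_le_mul_norm_sq_add hη (g - g') (xhat - ynext)
  have hhat' := hhat.inner_sub_le_breg hψ hΩ hxhat hynext
  have hnext' := hnext.inner_sub_le_breg hψ hΩ hynext hu
  have hnorm_le_breg : 1 / η * (1 / 2 * ‖xhat - ynext‖ ^ 2) ≤ 1 / η * breg ψ Dψ ynext xhat := by
    rw [norm_sub_rev]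
    gcongr
    exact hstrong _ hynext _ hxhat
  have hbreg_nonneg : 0 ≤ 1 / η * breg ψ Dψ xhat y :=
    mul_nonneg (by positivity)
      ((by positivity : (0:ℝ) ≤ 1 / 2 * ‖xhat - y‖ ^ 2).trans (hstrong _ hxhat _ hy))
  have hscale : 1 / (2 * η) * ‖xhat - ynext‖ ^ 2 = 1 / η * (1 / 2 * ‖xhat - ynext‖ ^ 2) := by
    ring
  rw [div_eq_mul_one_div (_ - _) η]
  linarith

end Bregman

theorem half_mul_add_div_le_sqrt {η M Q S : ℝ} (hQ : 0 < Q) (hM : 0 < M) (hS : S ≤ Q)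
    (hη : η = √(2 * M / Q)) : η / 2 * S + M / η ≤ √(2 * M * Q) := by
  have hηpos : 0 < η := hη ▸ Real.sqrt_pos.2 (by positivity)
  have hηQ : η * Q = √(2 * M * Q) := by
    rw [hη, ← Real.sqrt_sq hQ.le, ← Real.sqrt_mul (by positivity), Real.sqrt_sq hQ.le]
    congr 1
    field_simp
  have hηsq : η ^ 2 = 2 * M / Q := hη ▸ Real.sq_sqrt (by positivity)
  have hMη : M / η = η * Q / 2 := by
    field_simp
    rw [hηsq]
    field_simp
  calc η / 2 * S + M / η ≤ η / 2 * Q + η * Q / 2 := by rw [hMη]; gcongr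
    _ = √(2 * M * Q) := by rw [← hηQ]; ring

theorem stmt_5_general {n T : ℕ}
    (Ω : Set (EuclideanSpace ℝ (Fin n))) (hΩ : Convex ℝ Ω)
    (η : ℝ) (hη : 0 < η)
    (ψ : EuclideanSpace ℝ (Fin n) → ℝ)
    (Dψ : EuclideanSpace ℝ (Fin n) → EuclideanSpace ℝ (Fin n))
    (hdiff : ∀ z, HasGradientAt ψ (Dψ z) z)
    (hstrong : ∀ x ∈ Ω, ∀ y ∈ Ω, (1/2) * ‖x - y‖^2 ≤ breg ψ Dψ x y)
    (f : ℕ → EuclideanSpace ℝ (Fin n) → ℝ)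
    (x xhat g gtilde : ℕ → EuclideanSpace ℝ (Fin n))
    (hx : ∀ t ∈ Finset.Icc 1 (T+1), x t ∈ Ω)
    (hxhat : ∀ t ∈ Finset.Icc 1 T, xhat t ∈ Ω)
    (hsub : ∀ t ∈ Finset.Icc 1 T, ∀ y ∈ Ω,
      f t (xhat t) + ⟪g t, y - xhat t⟫ ≤ f t y)
    (hhat : ∀ t ∈ Finset.Icc 1 T, IsMinOn
      (fun z => ⟪gtilde t, z⟫ + (1/η) * breg ψ Dψ z (x t)) Ω (xhat t))
    (hnext : ∀ t ∈ Finset.Icc 1 T, IsMinOn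
      (fun z => ⟪g t, z⟫ + (1/η) * breg ψ Dψ z (x t)) Ω (x (t+1)))
    (xs : EuclideanSpace ℝ (Fin n)) (hxs : xs ∈ Ω)
    (M : ℝ) (hM : ∀ a ∈ Ω, ∀ b ∈ Ω, breg ψ Dψ xs a - breg ψ Dψ xs b ≤ M) :
    (∑ t ∈ Finset.Icc 1 T, (f t (xhat t) - f t xs) ≤
      (η/2) * ∑ t ∈ Finset.Icc 1 T, ‖g t - gtilde t‖^2 + M/η)
    ∧ (∀ Qbar : ℝ, 0 < Qbar → 0 < M →
        (∑ t ∈ Finset.Icc 1 T, ‖g t - gtilde t‖^2) ≤ Qbar →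
        η = Real.sqrt (2*M/Qbar) →
        ∑ t ∈ Finset.Icc 1 T, (f t (xhat t) - f t xs) ≤ Real.sqrt (2*M*Qbar)) := by
  have hstep : ∀ t ∈ Icc 1 T, f t (xhat t) - f t xs ≤
      η / 2 * ‖g t - gtilde t‖ ^ 2 + (breg ψ Dψ xs (x t) - breg ψ Dψ xs (x (t + 1))) / η := by
    intro t ht
    have hmem : ∀ s ∈ Icc t (t + 1), x s ∈ Ω := fun s hs =>
      hx s (by simp only [mem_Icc] at ht hs ⊢; omega)
    have hlin : f t (xhat t) - f t xs ≤ ⟪g t, xhat t - xs⟫ := by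
      have := hsub t ht xs hxs
      rw [← neg_sub xs, inner_neg_right]
      linarith
    exact hlin.trans <| inner_sub_le_of_optimistic_step hdiff hΩ hη hstrong
      (hmem t (by simp)) (hxhat t ht) (hmem (t + 1) (by simp)) hxs (hhat t ht) (hnext t ht)
  have htele : ∑ t ∈ Icc 1 T, (breg ψ Dψ xs (x t) - breg ψ Dψ xs (x (t + 1)))
      = breg ψ Dψ xs (x 1) - breg ψ Dψ xs (x (T + 1)) := by
    rw [← Ico_add_one_right_eq_Icc, ← neg_sub,
      ← sum_Ico_sub (f := fun t => breg ψ Dψ xs (x t)) (by omega), ← sum_neg_distrib]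
    simp only [neg_sub]
  have hbound : ∑ t ∈ Icc 1 T, (f t (xhat t) - f t xs) ≤
      η / 2 * ∑ t ∈ Icc 1 T, ‖g t - gtilde t‖ ^ 2 + M / η := by
    refine (sum_le_sum hstep).trans ?_
    rw [sum_add_distrib, ← mul_sum, ← sum_div, htele]
    gcongr
    exact hM _ (hx 1 (by simp)) _ (hx (T + 1) (by simp))
  exact ⟨hbound, fun Q hQ hMpos hS hηQ => hbound.trans (half_mul_add_div_le_sqrt hQ hMpos hS hηQ)⟩

theorem stmt_5 {n T : ℕ} (hT : 1 ≤ T)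
    (Ω : Set (EuclideanSpace ℝ (Fin n))) (hΩ : Convex ℝ Ω)
    (η : ℝ) (hη : 0 < η)
    (ψ : EuclideanSpace ℝ (Fin n) → ℝ)
    (Dψ : EuclideanSpace ℝ (Fin n) → EuclideanSpace ℝ (Fin n))
    (hdiff : ∀ z, HasGradientAt ψ (Dψ z) z)
    (hstrong : ∀ x ∈ Ω, ∀ y ∈ Ω, (1/2) * ‖x - y‖^2 ≤ breg ψ Dψ x y)
    (f : ℕ → EuclideanSpace ℝ (Fin n) → ℝ)
    (x xhat g gtilde : ℕ → EuclideanSpace ℝ (Fin n))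
    (hx : ∀ t ∈ Finset.Icc 1 (T+1), x t ∈ Ω)
    (hxhat : ∀ t ∈ Finset.Icc 1 T, xhat t ∈ Ω)
    (hsub : ∀ t ∈ Finset.Icc 1 T, ∀ y ∈ Ω,
      f t (xhat t) + ⟪g t, y - xhat t⟫ ≤ f t y)
    (hhat : ∀ t ∈ Finset.Icc 1 T, IsMinOn
      (fun z => ⟪gtilde t, z⟫ + (1/η) * breg ψ Dψ z (x t)) Ω (xhat t))
    (hnext : ∀ t ∈ Finset.Icc 1 T, IsMinOn
      (fun z => ⟪g t, z⟫ + (1/η) * breg ψ Dψ z (x t)) Ω (x (t+1)))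
    (xs : EuclideanSpace ℝ (Fin n)) (hxs : xs ∈ Ω)
    (M : ℝ) (hM : ∀ a ∈ Ω, ∀ b ∈ Ω, breg ψ Dψ xs a - breg ψ Dψ xs b ≤ M) :
    (∑ t ∈ Finset.Icc 1 T, (f t (xhat t) - f t xs) ≤
      (η/2) * ∑ t ∈ Finset.Icc 1 T, ‖g t - gtilde t‖^2 + M/η)
    ∧ (∀ Qbar : ℝ, 0 < Qbar → 0 < M →
        (∑ t ∈ Finset.Icc 1 T, ‖g t - gtilde t‖^2) ≤ Qbar →
        η = Real.sqrt (2*M/Qbar) →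
        ∑ t ∈ Finset.Icc 1 T, (f t (xhat t) - f t xs) ≤ Real.sqrt (2*M*Qbar)) :=
  stmt_5_general Ω hΩ η hη ψ Dψ hdiff hstrong f x xhat g gtilde hx hxhat hsub hhat hnext xs hxs M hM
end

section
/- Let R_1, …, R_n > 0, γ > 0, T ≥ 1, and let Ω ⊆ ∏_{i=1}^n [−R_i, R_i] be a convex set. Let g_t, g̃_t ∈ ℝ^n (t = 1, …, T) satisfy γ² ≥ (g_{t,i} − g̃_{t,i})² for all t ∈ [T] and i ∈ [n]. For t = 1, …, T let D_t be the diagonal matrix with entries (D_t)_{ii} = (1/R_i)·sqrt(γ² + ∑_{s=1}^{t−1}(g_{s,i} − g̃_{s,i})²). Let f_1, …, f_T : ℝ^n → ℝ, x_1, …, x_{T+1} ∈ Ω, x̂_1, …, x̂_T ∈ Ω be such that for each t: g_t is a subgradient of f_t at x̂_t over Ω, x̂_t is a minimizer over Ω of x ↦ ⟨g̃_t, x⟩ + (1/(2√2))·(x − x_t)ᵀD_t(x − x_t), and x_{t+1} is a minimizer over Ω of x ↦ ⟨g_t, x⟩ + (1/(2√2))·(x − x_t)ᵀD_t(x − x_t).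 Then for every x* ∈ Ω, ∑_{t=1}^T (f_t(x̂_t) − f_t(x*)) ≤ 2√2 · ∑_{i=1}^n R_i · sqrt(γ² + ∑_{t=1}^{T−1}(g_{t,i} − g̃_{t,i})²). -/
/-! Each round is controlled by the first-order optimality conditions of its two proximal
steps. Together with the three-point identity for the diagonal norm of `D_t` and Young's
inequality, they bound `⟪g_t, x̂_t - x*⟫` by a telescoping difference of weighted squared
distances to `x*` plus `∑ i, (g_{t,i} - g̃_{t,i})² / (4κ (D_t)_{ii})`, where `κ = 1/(2√2)`.
Since `D_t` increases with `t` and `Ω` has width `2 R_i` in coordinate `i`, the telescoping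
part is at most `4κ ∑ i, R_i² (D_T)_{ii}`. The error part is handled by
`∑ a_t / √(∑_{s ≤ t} a_s) ≤ 2 √(∑ a_t)`: because `a_t ≤ γ²`, the `γ²` in `D_t` makes up for
the missing current term `a_t`. With this `κ`, both parts equal `√2 ∑ i, R_i √(γ² + …)`. -/

open scoped RealInnerProductSpace
open Finset

noncomputable def quadForm {n : ℕ} (Q : Matrix (Fin n) (Fin n) ℝ)
    (x : EuclideanSpace ℝ (Fin n)) : ℝ :=
  ∑ i, ∑ j, x i * Q i j * x j

open Filter Topology

theorem quadForm_diagonal {n : ℕ} (d : Fin n → ℝ) (v : EuclideanSpace ℝ (Fin n)) :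
    quadForm (Matrix.diagonal d) v = ∑ i, d i * v i ^ 2 := by
  simp only [quadForm, Matrix.diagonal_apply, mul_ite, ite_mul, mul_zero, zero_mul,
    sum_ite_eq, mem_univ, if_true]
  exact sum_congr rfl fun i _ => by ring

theorem EuclideanSpace.real_inner_eq_sum {ι : Type*} [Fintype ι] (a b : EuclideanSpace ℝ ι) :
    ⟪a, b⟫ = ∑ i, a i * b i := by
  simp [PiLp.inner_apply, mul_comm]

theorem nonneg_of_forall_Ioc_nonneg_add_mul {L Q : ℝ}
    (h : ∀ l ∈ Set.Ioc (0 : ℝ) 1, 0 ≤ L + l * Q) : 0 ≤ L := by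
  have hlim : Tendsto (fun l : ℝ => L + l * Q) (𝓝[>] 0) (𝓝 L) := by
    have : Tendsto (fun l : ℝ => L + l * Q) (𝓝 0) (𝓝 (L + 0 * Q)) := by
      apply Continuous.tendsto; fun_prop
    simpa using this.mono_left nhdsWithin_le_nhds
  exact ge_of_tendsto hlim (eventually_of_mem (Ioc_mem_nhdsGT zero_lt_one) h)

section DiagonalProximal

variable {ι : Type*} [Fintype ι] {Ω : Set (EuclideanSpace ℝ ι)} {d : ι → ℝ} {κ : ℝ}

theorem IsMinOn.sum_grad_mul_sub_nonneg (hΩ : Convex ℝ Ω) {a w u y : EuclideanSpace ℝ ι}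
    (hmin : IsMinOn (fun z => ⟪a, z⟫ + κ * ∑ i, d i * (z i - w i) ^ 2) Ω u)
    (hu : u ∈ Ω) (hy : y ∈ Ω) :
    0 ≤ ∑ i, (a i + 2 * κ * d i * (u i - w i)) * (y i - u i) := by
  -- along the segment from `u` to `y` the objective is a quadratic in the step `l`
  refine nonneg_of_forall_Ioc_nonneg_add_mul (Q := κ * ∑ i, d i * (y i - u i) ^ 2) ?_
  rintro l ⟨hl0, hl1⟩
  have hle := isMinOn_iff.1 hmin _ (hΩ.add_smul_sub_mem hu hy ⟨hl0.le, hl1⟩)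
  have hexpand : ⟪a, u + l • (y - u)⟫ + κ * ∑ i, d i * ((u + l • (y - u)) i - w i) ^ 2 =
      ⟪a, u⟫ + κ * ∑ i, d i * (u i - w i) ^ 2 +
        l * (∑ i, (a i + 2 * κ * d i * (u i - w i)) * (y i - u i)
          + l * (κ * ∑ i, d i * (y i - u i) ^ 2)) := by
    simp only [EuclideanSpace.real_inner_eq_sum, PiLp.add_apply, PiLp.smul_apply,
      PiLp.sub_apply, smul_eq_mul, mul_sum, ← sum_add_distrib]
    exact sum_congr rfl fun i _ => by ring
  rw [hexpand] at hle
  exact nonneg_of_mul_nonneg_right (by linarith) hl0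

theorem mul_sub_mul_sq_le_sq_div {a e k : ℝ} (hk : 0 < k) :
    a * e - k * e ^ 2 ≤ a ^ 2 / (4 * k) := by
  rw [le_div_iff₀ (by positivity)]
  nlinarith [sq_nonneg (a - 2 * k * e)]

theorem optimistic_step_le (hΩ : Convex ℝ Ω) (hκ : 0 < κ) (hd : ∀ i, 0 < d i)
    {g g' w u v y : EuclideanSpace ℝ ι}
    (hu : IsMinOn (fun z => ⟪g', z⟫ + κ * ∑ i, d i * (z i - w i) ^ 2) Ω u)
    (hv : IsMinOn (fun z => ⟪g, z⟫ + κ * ∑ i, d i * (z i - w i) ^ 2) Ω v)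
    (huΩ : u ∈ Ω) (hvΩ : v ∈ Ω) (hy : y ∈ Ω) :
    ⟪g, u - y⟫ ≤ ∑ i, (κ * (d i * ((y i - w i) ^ 2 - (y i - v i) ^ 2))
      + (g i - g' i) ^ 2 / (4 * κ * d i)) := by
  have hA := hu.sum_grad_mul_sub_nonneg hΩ huΩ hvΩ
  have hB := hv.sum_grad_mul_sub_nonneg hΩ hvΩ hy
  have hcoord : ∀ i, g i * (u i - y i) + (g' i + 2 * κ * d i * (u i - w i)) * (v i - u i)
      + (g i + 2 * κ * d i * (v i - w i)) * (y i - v i) ≤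
        κ * (d i * ((y i - w i) ^ 2 - (y i - v i) ^ 2)) + (g i - g' i) ^ 2 / (4 * κ * d i) := by
    intro i
    have hyoung :=
      mul_sub_mul_sq_le_sq_div (a := g i - g' i) (e := u i - v i) (mul_pos hκ (hd i))
    have hdrop : 0 ≤ κ * d i * (u i - w i) ^ 2 := by have := hd i; positivity
    rw [← mul_assoc] at hyoung
    linarith
  have hsum := sum_le_sum fun i (_ : i ∈ univ) => hcoord i
  rw [sum_add_distrib, sum_add_distrib] at hsum
  rw [EuclideanSpace.real_inner_eq_sum]
  simp only [PiLp.sub_apply]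
  linarith

end DiagonalProximal

theorem div_sqrt_add_le {S a : ℝ} (hS : 0 ≤ S) (ha : 0 ≤ a) :
    a / √(S + a) ≤ 2 * (√(S + a) - √S) := by
  have hle : √S ≤ √(S + a) := Real.sqrt_le_sqrt (by linarith)
  rcases (Real.sqrt_nonneg (S + a)).eq_or_lt with h0 | hpos
  · rw [← h0, div_zero]
    linarith [Real.sqrt_nonneg S]
  rw [div_le_iff₀ hpos]
  nlinarith [Real.sq_sqrt hS, Real.sq_sqrt (add_nonneg hS ha), sq_nonneg (√(S + a) - √S)]

theorem sum_div_sqrt_partial_sum_le {a : ℕ → ℝ} (ha : ∀ t, 0 ≤ a t) (T : ℕ) :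
    ∑ t ∈ Icc 1 T, a t / √(∑ s ∈ Icc 1 t, a s) ≤ 2 * √(∑ t ∈ Icc 1 T, a t) := by
  induction T with
  | zero => simp
  | succ T ih =>
    rw [sum_Icc_succ_top (by omega), sum_Icc_succ_top (by omega)]
    have := div_sqrt_add_le (sum_nonneg fun t (_ : t ∈ Icc 1 T) => ha t) (ha (T + 1))
    linarith

theorem sum_div_sqrt_lagged_sum_le {a : ℕ → ℝ} {c : ℝ} (ha : ∀ t, 0 ≤ a t) {T : ℕ}
    (hac : ∀ t ∈ Icc 1 T, a t ≤ c) :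
    ∑ t ∈ Icc 1 T, a t / √(c + ∑ s ∈ Icc 1 (t - 1), a s) ≤
      2 * √(c + ∑ t ∈ Icc 1 (T - 1), a t) := by
  have hsplit : ∀ t ∈ Icc 1 T, ∑ s ∈ Icc 1 t, a s = ∑ s ∈ Icc 1 (t - 1), a s + a t := by
    intro t ht
    obtain ⟨k, rfl⟩ : ∃ k, t = k + 1 := ⟨t - 1, by simp at ht; omega⟩
    exact sum_Icc_succ_top (by omega) a
  rcases T.eq_zero_or_pos with rfl | hT
  · simp
  calc ∑ t ∈ Icc 1 T, a t / √(c + ∑ s ∈ Icc 1 (t - 1), a s)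
      ≤ ∑ t ∈ Icc 1 T, a t / √(∑ s ∈ Icc 1 t, a s) := by
        refine sum_le_sum fun t ht => ?_
        rcases (ha t).eq_or_lt with h0 | hpos
        · simp [← h0]
        have := sum_nonneg fun s (_ : s ∈ Icc 1 (t - 1)) => ha s
        refine div_le_div_of_nonneg_left (ha t) (Real.sqrt_pos.2 ?_) (Real.sqrt_le_sqrt ?_)
        · linarith [hsplit t ht]
        · linarith [hsplit t ht, hac t ht]
    _ ≤ 2 * √(∑ t ∈ Icc 1 T, a t) := sum_div_sqrt_partial_sum_le ha T
    _ ≤ 2 * √(c + ∑ t ∈ Icc 1 (T - 1), a t) := by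
        have hTmem : T ∈ Icc 1 T := by simp; omega
        gcongr
        linarith [hsplit T hTmem, hac T hTmem]

theorem sum_mul_sub_succ_le {d e : ℕ → ℝ} {B : ℝ} (hd : Monotone d) (hd0 : 0 ≤ d 0) {T : ℕ}
    (he : ∀ t ∈ Icc 1 (T + 1), e t ∈ Set.Icc 0 B) :
    ∑ t ∈ Icc 1 T, d t * (e t - e (t + 1)) ≤ B * d T := by
  suffices h : ∑ t ∈ Icc 1 T, d t * (e t - e (t + 1)) ≤ d T * (B - e (T + 1)) by
    nlinarith [(he (T + 1) (by simp)).1, hd0.trans (hd (Nat.zero_le T))]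
  induction T with
  | zero =>
    have := he 1 (by simp)
    simpa using mul_nonneg hd0 (sub_nonneg.2 this.2)
  | succ T ih =>
    rw [sum_Icc_succ_top (by omega)]
    have hT := ih fun t ht => he t (Icc_subset_Icc_right (by omega) ht)
    have heT := he (T + 1) (by simp)
    have hdT := hd (Nat.le_succ T)
    nlinarith [heT.2]

theorem optimistic_regret_le {n T : ℕ} {R : Fin n → ℝ} {Ω : Set (EuclideanSpace ℝ (Fin n))}
    (hΩ : Convex ℝ Ω) (hbox : ∀ x ∈ Ω, ∀ i, x i ∈ Set.Icc (-(R i)) (R i))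
    {κ : ℝ} (hκ : 0 < κ) {d : ℕ → Fin n → ℝ} (hd : ∀ t i, 0 < d t i)
    (hmono : ∀ i, Monotone (d · i)) {g gtilde : ℕ → EuclideanSpace ℝ (Fin n)}
    {f : ℕ → EuclideanSpace ℝ (Fin n) → ℝ} {x xhat : ℕ → EuclideanSpace ℝ (Fin n)}
    (hx : ∀ t ∈ Icc 1 (T + 1), x t ∈ Ω) (hxhat : ∀ t ∈ Icc 1 T, xhat t ∈ Ω)
    (hsub : ∀ t ∈ Icc 1 T, ∀ y ∈ Ω, f t (xhat t) + ⟪g t, y - xhat t⟫ ≤ f t y)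
    (hhat : ∀ t ∈ Icc 1 T, IsMinOn (fun z => ⟪gtilde t, z⟫
      + κ * quadForm (Matrix.diagonal (d t)) (z - x t)) Ω (xhat t))
    (hnext : ∀ t ∈ Icc 1 T, IsMinOn (fun z => ⟪g t, z⟫
      + κ * quadForm (Matrix.diagonal (d t)) (z - x t)) Ω (x (t + 1)))
    {xs : EuclideanSpace ℝ (Fin n)} (hxs : xs ∈ Ω) :
    ∑ t ∈ Icc 1 T, (f t (xhat t) - f t xs) ≤
      ∑ i, (κ * (4 * R i ^ 2 * d T i)
        + ∑ t ∈ Icc 1 T, (g t i - gtilde t i) ^ 2 / (4 * κ * d t i)) := by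
  have hstep : ∀ t ∈ Icc 1 T, f t (xhat t) - f t xs ≤
      ∑ i, (κ * (d t i * ((xs i - x t i) ^ 2 - (xs i - x (t + 1) i) ^ 2))
        + (g t i - gtilde t i) ^ 2 / (4 * κ * d t i)) := by
    intro t ht
    have hfirst : f t (xhat t) - f t xs ≤ ⟪g t, xhat t - xs⟫ := by
      have hneg := inner_neg_right (𝕜 := ℝ) (g t) (xs - xhat t)
      rw [neg_sub] at hneg
      linarith [hsub t ht xs hxs]
    simp only [quadForm_diagonal, PiLp.sub_apply] at hhat hnext
    exact hfirst.trans (optimistic_step_le hΩ hκ (hd t) (hhat t ht) (hnext t ht) (hxhat t ht)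
      (hx (t + 1) (by simp at ht ⊢; omega)) hxs)
  have hdist : ∀ t ∈ Icc 1 (T + 1), ∀ i, (xs i - x t i) ^ 2 ∈ Set.Icc 0 (4 * R i ^ 2) := by
    intro t ht i
    have h1 := hbox xs hxs i
    have h2 := hbox (x t) (hx t ht) i
    simp only [Set.mem_Icc] at h1 h2 ⊢
    constructor <;> nlinarith
  calc ∑ t ∈ Icc 1 T, (f t (xhat t) - f t xs)
      ≤ ∑ t ∈ Icc 1 T, ∑ i, (κ * (d t i * ((xs i - x t i) ^ 2 - (xs i - x (t + 1) i) ^ 2))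
        + (g t i - gtilde t i) ^ 2 / (4 * κ * d t i)) := sum_le_sum hstep
    _ = ∑ i, (κ * ∑ t ∈ Icc 1 T, d t i * ((xs i - x t i) ^ 2 - (xs i - x (t + 1) i) ^ 2)
        + ∑ t ∈ Icc 1 T, (g t i - gtilde t i) ^ 2 / (4 * κ * d t i)) := by
      rw [sum_comm]
      simp only [sum_add_distrib, mul_sum]
    _ ≤ _ := by
      gcongr with i
      exact sum_mul_sub_succ_le (hmono i) (hd 0 i).le fun t ht => hdist t ht i

theorem add_sum_div_le_of_sum_div_le {s : Finset ℕ} {a b : ℕ → ℝ} {κ R B : ℝ}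
    (hκ : 0 < κ) (hR : 0 < R) (hab : ∑ t ∈ s, a t / b t ≤ 2 * B) :
    κ * (4 * R ^ 2 * (1 / R * B)) + ∑ t ∈ s, a t / (4 * κ * (1 / R * b t)) ≤
      (4 * κ + 1 / (2 * κ)) * (R * B) := by
  have hsum : ∑ t ∈ s, a t / (4 * κ * (1 / R * b t)) = R / (4 * κ) * ∑ t ∈ s, a t / b t := by
    rw [mul_sum]
    exact sum_congr rfl fun t _ => by field_simp
  rw [hsum]
  have := mul_le_mul_of_nonneg_left hab (by positivity : 0 ≤ R / (4 * κ))
  have hR0 := hR.ne'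
  calc _ ≤ κ * (4 * R ^ 2 * (1 / R * B)) + R / (4 * κ) * (2 * B) := by linarith
    _ = _ := by field_simp; ring

theorem stmt_6_general {n T : ℕ}
    (R : Fin n → ℝ) (hR : ∀ i, 0 < R i) (γ : ℝ) (hγ : 0 < γ)
    (Ω : Set (EuclideanSpace ℝ (Fin n))) (hΩ : Convex ℝ Ω)
    (hbox : ∀ x ∈ Ω, ∀ i, x i ∈ Set.Icc (-(R i)) (R i))
    (g gtilde : ℕ → EuclideanSpace ℝ (Fin n))
    (hbound : ∀ t ∈ Finset.Icc 1 T, ∀ i, (g t i - gtilde t i)^2 ≤ γ^2)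
    (D : ℕ → Matrix (Fin n) (Fin n) ℝ)
    (hD : ∀ t, D t = Matrix.diagonal (fun i =>
      (1/(R i)) * Real.sqrt (γ^2 + ∑ s ∈ Finset.Icc 1 (t-1), (g s i - gtilde s i)^2)))
    (f : ℕ → EuclideanSpace ℝ (Fin n) → ℝ)
    (x xhat : ℕ → EuclideanSpace ℝ (Fin n))
    (hx : ∀ t ∈ Finset.Icc 1 (T+1), x t ∈ Ω)
    (hxhat : ∀ t ∈ Finset.Icc 1 T, xhat t ∈ Ω)
    (hsub : ∀ t ∈ Finset.Icc 1 T, ∀ y ∈ Ω,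
      f t (xhat t) + ⟪g t, y - xhat t⟫ ≤ f t y)
    (hhat : ∀ t ∈ Finset.Icc 1 T, IsMinOn
      (fun z => ⟪gtilde t, z⟫ + (1/(2*Real.sqrt 2)) * quadForm (D t) (z - x t)) Ω (xhat t))
    (hnext : ∀ t ∈ Finset.Icc 1 T, IsMinOn
      (fun z => ⟪g t, z⟫ + (1/(2*Real.sqrt 2)) * quadForm (D t) (z - x t)) Ω (x (t+1))) :
    ∀ xs ∈ Ω,
      ∑ t ∈ Finset.Icc 1 T, (f t (xhat t) - f t xs) ≤
        2 * Real.sqrt 2 * ∑ i, R i *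
          Real.sqrt (γ^2 + ∑ t ∈ Finset.Icc 1 (T-1), (g t i - gtilde t i)^2) := by
  intro xs hxs
  have hV : ∀ t i, 0 < γ ^ 2 + ∑ s ∈ Icc 1 (t - 1), (g s i - gtilde s i) ^ 2 :=
    fun t i => by positivity
  have hVmono : ∀ i, Monotone fun t => γ ^ 2 + ∑ s ∈ Icc 1 (t - 1), (g s i - gtilde s i) ^ 2 :=
    fun i t t' htt' => add_le_add_right (sum_le_sum_of_subset_of_nonneg
      (Icc_subset_Icc_right (by omega)) fun s _ _ => sq_nonneg _) _
  have hconst : 2 * √2 = 4 * (1 / (2 * √2)) + 1 / (2 * (1 / (2 * √2))) := by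
    field_simp
    rw [Real.sq_sqrt zero_le_two]
    ring
  refine (optimistic_regret_le hΩ hbox (κ := 1 / (2 * √2)) (by positivity)
    (fun t i => mul_pos (one_div_pos.2 (hR i)) (Real.sqrt_pos.2 (hV t i)))
    (fun i t t' htt' => mul_le_mul_of_nonneg_left (Real.sqrt_le_sqrt (hVmono i htt'))
      (one_div_pos.2 (hR i)).le) hx hxhat hsub (by simpa only [hD] using hhat)
      (by simpa only [hD] using hnext) hxs).trans ?_
  rw [mul_sum]
  refine sum_le_sum fun i _ => (add_sum_div_le_of_sum_div_le (by positivity) (hR i)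
    (sum_div_sqrt_lagged_sum_le (fun t => sq_nonneg _) fun t ht => hbound t ht i)).trans_eq ?_
  rw [← hconst]

theorem stmt_6 {n T : ℕ} (hT : 1 ≤ T)
    (R : Fin n → ℝ) (hR : ∀ i, 0 < R i) (γ : ℝ) (hγ : 0 < γ)
    (Ω : Set (EuclideanSpace ℝ (Fin n))) (hΩ : Convex ℝ Ω)
    (hbox : ∀ x ∈ Ω, ∀ i, x i ∈ Set.Icc (-(R i)) (R i))
    (g gtilde : ℕ → EuclideanSpace ℝ (Fin n))
    (hbound : ∀ t ∈ Finset.Icc 1 T, ∀ i, (g t i - gtilde t i)^2 ≤ γ^2)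
    (D : ℕ → Matrix (Fin n) (Fin n) ℝ)
    (hD : ∀ t, D t = Matrix.diagonal (fun i =>
      (1/(R i)) * Real.sqrt (γ^2 + ∑ s ∈ Finset.Icc 1 (t-1), (g s i - gtilde s i)^2)))
    (f : ℕ → EuclideanSpace ℝ (Fin n) → ℝ)
    (x xhat : ℕ → EuclideanSpace ℝ (Fin n))
    (hx : ∀ t ∈ Finset.Icc 1 (T+1), x t ∈ Ω)
    (hxhat : ∀ t ∈ Finset.Icc 1 T, xhat t ∈ Ω)
    (hsub : ∀ t ∈ Finset.Icc 1 T, ∀ y ∈ Ω,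
      f t (xhat t) + ⟪g t, y - xhat t⟫ ≤ f t y)
    (hhat : ∀ t ∈ Finset.Icc 1 T, IsMinOn
      (fun z => ⟪gtilde t, z⟫ + (1/(2*Real.sqrt 2)) * quadForm (D t) (z - x t)) Ω (xhat t))
    (hnext : ∀ t ∈ Finset.Icc 1 T, IsMinOn
      (fun z => ⟪g t, z⟫ + (1/(2*Real.sqrt 2)) * quadForm (D t) (z - x t)) Ω (x (t+1))) :
    ∀ xs ∈ Ω,
      ∑ t ∈ Finset.Icc 1 T, (f t (xhat t) - f t xs) ≤
        2 * Real.sqrt 2 * ∑ i, R i *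
          Real.sqrt (γ^2 + ∑ t ∈ Finset.Icc 1 (T-1), (g t i - gtilde t i)^2) :=
  stmt_6_general R hR γ hγ Ω hΩ hbox g gtilde hbound D hD f x xhat hx hxhat hsub hhat hnext
end

section
/- Let Ω ⊆ ℝ^n be a convex set with sup_{x,y∈Ω}‖x − y‖₂ ≤ D for some D > 0, let γ > 0 and T ≥ 1. Let g_t, g̃_t ∈ ℝ^n (t = 1, …, T) satisfy γ²·I ⪰ (g_t − g̃_t)(g_t − g̃_t)ᵀ (positive semidefinite order) for all t ∈ [T]. For t = 1, …, T let Q_t := (γ²·I + ∑_{s=1}^{t−1}(g_s − g̃_s)(g_s − g̃_s)ᵀ)^{1/2}, the positive semidefinite square root. Let f_1, …, f_T : ℝ^n → ℝ, x_1, …, x_{T+1} ∈ Ω, x̂_1, …, x̂_T ∈ Ω be such that for each t: g_t is a subgradient of f_t at x̂_t over Ω, x̂_t is a minimizer over Ω of x ↦ ⟨g̃_t, x⟩ + (1/(√2·D))·(x − x_t)ᵀQ_t(x − x_t), and x_{t+1} is a minimizer over Ω of x ↦ ⟨g_t, x⟩ + (1/(√2·D))·(x − x_t)ᵀQ_t(x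 − x_t). Then for every x* ∈ Ω, ∑_{t=1}^T (f_t(x̂_t) − f_t(x*)) ≤ √2 · D · tr((γ²·I + ∑_{t=1}^{T−1}(g_t − g̃_t)(g_t − g̃_t)ᵀ)^{1/2}). -/
open scoped RealInnerProductSpace
open Finset

noncomputable def outer {n : ℕ} (v : EuclideanSpace ℝ (Fin n)) :
    Matrix (Fin n) (Fin n) ℝ :=
  Matrix.vecMulVec (fun i => v i) (fun i => v i)

/-!
With `c = 1 / (√2 D)` and `δₜ = gₜ - g̃ₜ`, the three-point inequality for both proximal steps
and completing the square give, for every round,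
`fₜ(x̂ₜ) - fₜ(x*) ≤ (4c)⁻¹ δₜᵀ Qₜ⁻¹ δₜ + c (‖x* - xₜ‖²_{Qₜ} - ‖x* - xₜ₊₁‖²_{Qₜ})`.
The square root is operator monotone, so `Qₜ` increases and the distance terms telescope to at
most `D² tr Q_T`. For the gradient terms, the potential `2 tr Qₜ - γ² tr Qₜ⁻¹` grows by at least
`δₜᵀ Qₜ⁻¹ δₜ` from `t` to `t + 1` (a trace Cauchy–Schwarz argument, using `δₜ δₜᵀ ≤ γ² I` to pay
for `Qₜ` lagging one gradient behind), so they sum to at most `2 tr Q_T`.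
Finally `(4c)⁻¹ · 2 + c D² = √2 D`.
-/

open Matrix Filter Topology
open scoped MatrixOrder

namespace Matrix

variable {m : Type*} [Fintype m]

lemma posSemidef_vecMulVec_self (v : m → ℝ) : (vecMulVec v v).PosSemidef := by
  simpa using posSemidef_vecMulVec_self_star v

lemma vecMulVec_self_le_smul_one [DecidableEq m] (v : m → ℝ) :
    vecMulVec v v ≤ (v ⬝ᵥ v) • (1 : Matrix m m ℝ) := by
  refine PosSemidef.of_dotProduct_mulVec_nonneg
    ((isHermitian_one.smul (IsSelfAdjoint.all _)).sub (posSemidef_vecMulVec_self v).isHermitian)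
    fun w => ?_
  have hcs := Finset.sum_mul_sq_le_sq_mul_sq univ v w
  rw [star_trivial, sub_mulVec, smul_mulVec, one_mulVec, vecMulVec_mulVec, dotProduct_sub,
    dotProduct_smul, dotProduct_smul, smul_eq_mul, op_smul_eq_mul, dotProduct_comm w v,
    sub_nonneg]
  simpa only [dotProduct, sq] using hcs

lemma trace_mul_vecMulVec_self (A : Matrix m m ℝ) (v : m → ℝ) :
    (A * vecMulVec v v).trace = v ⬝ᵥ A *ᵥ v := by
  rw [mul_vecMulVec, trace_vecMulVec, dotProduct_comm]

lemma trace_mul_smul_one [DecidableEq m] (A : Matrix m m ℝ) (c : ℝ) :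
    (A * c • (1 : Matrix m m ℝ)).trace = c * A.trace := by
  rw [Matrix.mul_smul, Matrix.mul_one, trace_smul, smul_eq_mul]

lemma IsHermitian.dotProduct_mulVec_comm {A : Matrix m m ℝ} (hA : A.IsHermitian)
    (v w : m → ℝ) : v ⬝ᵥ A *ᵥ w = w ⬝ᵥ A *ᵥ v := by
  rw [dotProduct_mulVec, ← mulVec_transpose, ← conjTranspose_eq_transpose_of_trivial, hA.eq,
    dotProduct_comm]

lemma PosSemidef.trace_mul_nonneg {A B : Matrix m m ℝ} (hA : A.PosSemidef)
    (hB : B.PosSemidef) : 0 ≤ (A * B).trace := by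
  classical
  obtain ⟨C, rfl⟩ := CStarAlgebra.nonneg_iff_eq_star_mul_self.mp hB.nonneg
  rw [← Matrix.mul_assoc, trace_mul_cycle, star_eq_conjTranspose]
  exact (hA.mul_mul_conjTranspose_same C).trace_nonneg

lemma PosSemidef.trace_mul_le_trace_mul {C X Y : Matrix m m ℝ} (hC : C.PosSemidef)
    (h : X ≤ Y) : (C * X).trace ≤ (C * Y).trace := by
  have := hC.trace_mul_nonneg h
  rwa [Matrix.mul_sub, trace_sub, sub_nonneg] at this

lemma PosSemidef.dotProduct_mulVec_le_trace_mul {A : Matrix m m ℝ} (hA : A.PosSemidef)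
    (v : m → ℝ) : v ⬝ᵥ A *ᵥ v ≤ A.trace * (v ⬝ᵥ v) := by
  classical
  calc v ⬝ᵥ A *ᵥ v = (A * vecMulVec v v).trace := (trace_mul_vecMulVec_self A v).symm
    _ ≤ (A * (v ⬝ᵥ v) • 1).trace := hA.trace_mul_le_trace_mul (vecMulVec_self_le_smul_one v)
    _ = A.trace * (v ⬝ᵥ v) := by rw [trace_mul_smul_one, mul_comm]

lemma PosSemidef.le_of_mul_self_le_mul_self {A B : Matrix m m ℝ} (hA : A.PosSemidef)
    (hB : B.PosSemidef) (h : A * A ≤ B * B) : A ≤ B := by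
  classical
  have hX : (B - A).IsHermitian := hB.1.sub hA.1
  refine hX.posSemidef_iff_eigenvalues_nonneg.mpr fun i => ?_
  by_contra hneg
  have hμ : hX.eigenvalues i < 0 := lt_of_not_ge hneg
  set μ := hX.eigenvalues i
  set v := (hX.eigenvectorBasis i).ofLp
  have hv : (B - A) *ᵥ v = μ • v := hX.mulVec_eigenvectorBasis i
  have hv0 : v ≠ 0 := by simpa [v] using hX.eigenvectorBasis.orthonormal.ne_zero i
  have hsq : v ⬝ᵥ (B * B - A * A) *ᵥ v = μ * (v ⬝ᵥ B *ᵥ v + v ⬝ᵥ A *ᵥ v) := by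
    rw [show B * B - A * A = B * (B - A) + (B - A) * A by noncomm_ring, add_mulVec,
      ← mulVec_mulVec, ← mulVec_mulVec, hv, dotProduct_add, hX.dotProduct_mulVec_comm v,
      hv, mulVec_smul, dotProduct_smul, dotProduct_smul, dotProduct_comm (A *ᵥ v)]
    simp only [smul_eq_mul]
    ring
  have hAv := hA.dotProduct_mulVec_nonneg v
  have hBv := hB.dotProduct_mulVec_nonneg v
  have hsq_nonneg := h.dotProduct_mulVec_nonneg v
  simp only [star_trivial] at hAv hBv hsq_nonneg
  have hA0 : A *ᵥ v = 0 := (hA.dotProduct_mulVec_zero_iff v).mp (by simp; nlinarith)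
  have hB0 : B *ᵥ v = 0 := (hB.dotProduct_mulVec_zero_iff v).mp (by simp; nlinarith)
  rw [sub_mulVec, hA0, hB0, sub_zero, eq_comm, smul_eq_zero] at hv
  exact hv.elim hμ.ne hv0

lemma two_mul_trace_mul_conjTranspose_le (U W : Matrix m m ℝ) :
    2 * (U * Wᴴ).trace ≤ (U * Uᴴ).trace + (W * Wᴴ).trace := by
  have h := (posSemidef_self_mul_conjTranspose (U - W)).trace_nonneg
  have hsymm : (W * Uᴴ).trace = (U * Wᴴ).trace := by
    rw [← conjTranspose_conjTranspose W, ← conjTranspose_mul, trace_conjTranspose, star_trivial,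
      conjTranspose_conjTranspose]
  rw [conjTranspose_sub, Matrix.sub_mul, Matrix.mul_sub, Matrix.mul_sub, trace_sub, trace_sub,
    trace_sub, hsymm] at h
  linarith

variable [DecidableEq m]

lemma PosSemidef.posDef_of_smul_one_le_mul_self {Q : Matrix m m ℝ} {γ : ℝ} (hγ : 0 < γ)
    (hQ : Q.PosSemidef) (h : γ ^ 2 • (1 : Matrix m m ℝ) ≤ Q * Q) : Q.PosDef := by
  have hγQ : γ • (1 : Matrix m m ℝ) ≤ Q :=
    (PosSemidef.one.smul hγ.le).le_of_mul_self_le_mul_self hQ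
      (by rwa [smul_mul_smul, Matrix.one_mul, ← sq])
  simpa using (PosDef.one.smul hγ).add_posSemidef hγQ

lemma PosDef.dotProduct_inv_mulVec_le_of_vecMulVec_le {Q : Matrix m m ℝ} {δ : m → ℝ} {a : ℝ}
    (hQ : Q.PosDef) (hδ : vecMulVec δ δ ≤ a • 1) : δ ⬝ᵥ Q⁻¹ *ᵥ δ ≤ a * Q⁻¹.trace := by
  rw [← trace_mul_vecMulVec_self, ← trace_mul_smul_one]
  exact hQ.inv.posSemidef.trace_mul_le_trace_mul hδ

lemma PosDef.mul_trace_inv_le_trace {Q : Matrix m m ℝ} {a : ℝ} (hQ : Q.PosDef)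
    (h : a • 1 ≤ Q * Q) : a * Q⁻¹.trace ≤ Q.trace := by
  have hdet := (isUnit_iff_isUnit_det Q).mp hQ.isUnit
  calc a * Q⁻¹.trace = (Q⁻¹ * a • 1).trace := (trace_mul_smul_one _ _).symm
    _ ≤ (Q⁻¹ * (Q * Q)).trace := hQ.inv.posSemidef.trace_mul_le_trace_mul h
    _ = Q.trace := by rw [nonsing_inv_mul_cancel_left _ _ hdet]

lemma PosDef.inv_mul_mul_inv_le_one {Q A : Matrix m m ℝ} (hQ : Q.PosDef) (hA : A ≤ Q * Q) :
    Q⁻¹ * A * Q⁻¹ ≤ 1 := by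
  have hdet := (isUnit_iff_isUnit_det Q).mp hQ.isUnit
  have h := hA.mul_mul_conjTranspose_same Q⁻¹
  rw [hQ.inv.isHermitian.eq, Matrix.mul_sub, Matrix.sub_mul, ← Matrix.mul_assoc,
    nonsing_inv_mul _ hdet, Matrix.one_mul, mul_nonsing_inv _ hdet] at h
  exact h

/-- Writing `A = BᴴB` and `P - Q = CᴴC`, the left side is `tr (U Wᴴ)` with `U = B Q⁻¹ Cᴴ` and
`W = B P⁻¹ Cᴴ`, while `tr (U Uᴴ)` and `tr (W Wᴴ)` are both at most `tr (P - Q)`. -/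
lemma PosDef.trace_inv_sub_inv_mul_le {Q P A : Matrix m m ℝ} (hQ : Q.PosDef) (hP : P.PosDef)
    (hQP : Q ≤ P) (hA : 0 ≤ A) (hAQ : A ≤ Q * Q) (hAP : A ≤ P * P) :
    ((Q⁻¹ - P⁻¹) * A).trace ≤ (P - Q).trace := by
  obtain ⟨B, rfl⟩ := CStarAlgebra.nonneg_iff_eq_star_mul_self.mp hA
  obtain ⟨C, hC⟩ := CStarAlgebra.nonneg_iff_eq_star_mul_self.mp (sub_nonneg.mpr hQP)
  rw [star_eq_conjTranspose] at hC ⊢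
  have hbound : ∀ R : Matrix m m ℝ, R.PosDef → Bᴴ * B ≤ R * R →
      (B * R⁻¹ * Cᴴ * (B * R⁻¹ * Cᴴ)ᴴ).trace ≤ (P - Q).trace := fun R hR hBR => by
    calc (B * R⁻¹ * Cᴴ * (B * R⁻¹ * Cᴴ)ᴴ).trace
        = ((P - Q) * (R⁻¹ * (Bᴴ * B) * R⁻¹)).trace := by
          rw [hC, conjTranspose_mul, conjTranspose_mul, conjTranspose_conjTranspose,
            hR.inv.isHermitian.eq]
          simp only [Matrix.mul_assoc]
          rw [trace_mul_comm B]
          simp only [Matrix.mul_assoc]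
          rw [trace_mul_comm R⁻¹]
          simp only [Matrix.mul_assoc]
      _ ≤ ((P - Q) * 1).trace :=
          (le_iff.mp hQP).trace_mul_le_trace_mul (hR.inv_mul_mul_inv_le_one hBR)
      _ = (P - Q).trace := by rw [Matrix.mul_one]
  have hcross :
      ((Q⁻¹ - P⁻¹) * (Bᴴ * B)).trace = (B * Q⁻¹ * Cᴴ * (B * P⁻¹ * Cᴴ)ᴴ).trace := by
    have hdiff : Q⁻¹ - P⁻¹ = Q⁻¹ * (P - Q) * P⁻¹ := by
      rw [Matrix.mul_sub, Matrix.sub_mul,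
        mul_nonsing_inv_cancel_right _ _ ((isUnit_iff_isUnit_det P).mp hP.isUnit),
        nonsing_inv_mul _ ((isUnit_iff_isUnit_det Q).mp hQ.isUnit), Matrix.one_mul]
    rw [hdiff, hC, conjTranspose_mul, conjTranspose_mul, conjTranspose_conjTranspose,
      hP.inv.isHermitian.eq]
    simp only [Matrix.mul_assoc]
    rw [trace_mul_comm B]
    simp only [Matrix.mul_assoc]
  linarith [two_mul_trace_mul_conjTranspose_le (B * Q⁻¹ * Cᴴ) (B * P⁻¹ * Cᴴ),
    hbound Q hQ hAQ, hbound P hP hAP]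

lemma PosDef.dotProduct_inv_mulVec_le {γ : ℝ} {Q P : Matrix m m ℝ} {δ : m → ℝ}
    (hQ : Q.PosDef) (hP : P.PosDef) (hQγ : γ ^ 2 • (1 : Matrix m m ℝ) ≤ Q * Q)
    (hδ : vecMulVec δ δ ≤ γ ^ 2 • 1) (hPQ : P * P = Q * Q + vecMulVec δ δ) :
    δ ⬝ᵥ Q⁻¹ *ᵥ δ ≤ 2 * (P.trace - Q.trace) + γ ^ 2 * (Q⁻¹.trace - P⁻¹.trace) := by
  have hQP : Q * Q ≤ P * P :=
    hPQ ▸ le_add_of_nonneg_right (posSemidef_vecMulVec_self δ).nonneg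
  have key := hQ.trace_inv_sub_inv_mul_le hP
    (hQ.posSemidef.le_of_mul_self_le_mul_self hP.posSemidef hQP)
    (sub_nonneg.mpr (hQγ.trans hQP))
    (by rw [le_iff, hPQ, show Q * Q - (Q * Q + vecMulVec δ δ - γ ^ 2 • 1) =
      γ ^ 2 • 1 - vecMulVec δ δ by abel]; exact hδ)
    (sub_le_self _ (PosSemidef.one.smul (sq_nonneg γ)).nonneg)
  have hlhs : δ ⬝ᵥ Q⁻¹ *ᵥ δ = (Q⁻¹ * (P * P)).trace - Q.trace := by
    rw [← trace_mul_vecMulVec_self, show vecMulVec δ δ = P * P - Q * Q by rw [hPQ]; abel,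
      Matrix.mul_sub, trace_sub,
      nonsing_inv_mul_cancel_left _ _ ((isUnit_iff_isUnit_det Q).mp hQ.isUnit)]
  rw [Matrix.sub_mul, Matrix.mul_sub, Matrix.mul_sub,
    nonsing_inv_mul_cancel_left _ _ ((isUnit_iff_isUnit_det P).mp hP.isUnit), trace_sub,
    trace_sub, trace_sub, trace_sub, trace_mul_smul_one, trace_mul_smul_one] at key
  linarith

end Matrix

lemma Finset.add_one_mem_Icc_of_mem_Ico {t T : ℕ} (ht : t ∈ Ico 1 T) : t + 1 ∈ Icc 1 T := by
  rw [mem_Ico] at ht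
  exact mem_Icc.mpr ⟨by omega, ht.2⟩

lemma Finset.sum_Icc_sub_le_of_succ_sub_le {a b τ : ℕ → ℝ} {T : ℕ} (hT : 1 ≤ T)
    (h₁ : a 1 ≤ τ 1) (hstep : ∀ t ∈ Ico 1 T, a (t + 1) - b t ≤ τ (t + 1) - τ t) :
    ∑ t ∈ Icc 1 T, (a t - b t) ≤ τ T - b T := by
  induction T, hT using Nat.le_induction with
  | base => simpa using h₁
  | succ T hT ih =>
    have hlast := hstep T (mem_Ico.mpr ⟨hT, T.lt_succ_self⟩)
    have hprev := ih fun t ht =>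
      hstep t (Ico_subset_Ico_right T.le_succ ht)
    rw [sum_Icc_succ_top (by omega)]
    linarith

/-- The preconditioners of AdaGrad-type methods: `Q t` is the positive semidefinite square root
of `γ² I + ∑_{s < t} δ s δ sᵀ`. -/
structure IsAdaGradPreconditioner {m : Type*} [Fintype m] [DecidableEq m] (γ : ℝ) (T : ℕ)
    (Q : ℕ → Matrix m m ℝ) (δ : ℕ → m → ℝ) : Prop where
  posSemidef : ∀ t ∈ Icc 1 T, (Q t).PosSemidef
  mul_self_eq : ∀ t ∈ Icc 1 T,
    Q t * Q t = γ ^ 2 • 1 + ∑ s ∈ Icc 1 (t - 1), vecMulVec (δ s) (δ s)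

namespace IsAdaGradPreconditioner

variable {m : Type*} [Fintype m] [DecidableEq m] {γ : ℝ} {T : ℕ} {Q : ℕ → Matrix m m ℝ}
  {δ : ℕ → m → ℝ}

lemma smul_one_le_mul_self (hQ : IsAdaGradPreconditioner γ T Q δ) {t : ℕ}
    (ht : t ∈ Icc 1 T) : γ ^ 2 • 1 ≤ Q t * Q t := by
  rw [hQ.mul_self_eq t ht, le_iff, add_sub_cancel_left]
  exact posSemidef_sum _ fun s _ => posSemidef_vecMulVec_self (δ s)

lemma posDef (hQ : IsAdaGradPreconditioner γ T Q δ) (hγ : 0 < γ) {t : ℕ}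
    (ht : t ∈ Icc 1 T) : (Q t).PosDef :=
  (hQ.posSemidef t ht).posDef_of_smul_one_le_mul_self hγ (hQ.smul_one_le_mul_self ht)

lemma mul_self_succ (hQ : IsAdaGradPreconditioner γ T Q δ) {t : ℕ} (ht : t ∈ Ico 1 T) :
    Q (t + 1) * Q (t + 1) = Q t * Q t + vecMulVec (δ t) (δ t) := by
  obtain ⟨s, rfl⟩ : ∃ s, t = s + 1 := ⟨t - 1, by rw [mem_Ico] at ht; omega⟩
  rw [hQ.mul_self_eq _ (add_one_mem_Icc_of_mem_Ico ht), hQ.mul_self_eq _ (Ico_subset_Icc_self ht),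
    Nat.add_sub_cancel, Nat.add_sub_cancel, sum_Icc_succ_top (by omega), add_assoc]

lemma le_succ (hQ : IsAdaGradPreconditioner γ T Q δ) {t : ℕ} (ht : t ∈ Ico 1 T) :
    Q t ≤ Q (t + 1) := by
  refine (hQ.posSemidef t (Ico_subset_Icc_self ht)).le_of_mul_self_le_mul_self
    (hQ.posSemidef (t + 1) (add_one_mem_Icc_of_mem_Ico ht)) ?_
  rw [hQ.mul_self_succ ht]
  exact le_add_of_nonneg_right (posSemidef_vecMulVec_self (δ t)).nonneg

/-- The AdaGrad lemma, for the lagged preconditioner: `Q t` does not yet contain `δ t`. -/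
lemma sum_dotProduct_inv_mulVec_le (hQ : IsAdaGradPreconditioner γ T Q δ) (hγ : 0 < γ)
    (hT : 1 ≤ T) (hδ : ∀ t ∈ Icc 1 T, vecMulVec (δ t) (δ t) ≤ γ ^ 2 • 1) :
    ∑ t ∈ Icc 1 T, δ t ⬝ᵥ (Q t)⁻¹ *ᵥ δ t ≤ 2 * (Q T).trace := by
  set φ : ℕ → ℝ := fun t => 2 * (Q t).trace - γ ^ 2 * (Q t)⁻¹.trace
  have hstep : ∀ t ∈ Ico 1 T, δ t ⬝ᵥ (Q t)⁻¹ *ᵥ δ t ≤ φ (t + 1) - φ t := fun t ht => by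
    have ht' := Ico_subset_Icc_self ht
    have := (hQ.posDef hγ ht').dotProduct_inv_mulVec_le
      (hQ.posDef hγ (add_one_mem_Icc_of_mem_Ico ht)) (hQ.smul_one_le_mul_self ht') (hδ t ht')
      (hQ.mul_self_succ ht)
    simp only [φ]
    linarith
  have hTmem : T ∈ Icc 1 T := mem_Icc.mpr ⟨hT, le_rfl⟩
  have h1mem : 1 ∈ Icc 1 T := mem_Icc.mpr ⟨le_rfl, hT⟩
  have hlast := (hQ.posDef hγ hTmem).dotProduct_inv_mulVec_le_of_vecMulVec_le (hδ T hTmem)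
  have hfirst := (hQ.posDef hγ h1mem).mul_trace_inv_le_trace (hQ.smul_one_le_mul_self h1mem)
  have htr : 0 ≤ (Q 1).trace := (hQ.posSemidef 1 h1mem).trace_nonneg
  rw [← Ico_add_one_right_eq_Icc, sum_Ico_succ_top hT]
  have := (sum_le_sum hstep).trans_eq (sum_Ico_sub φ hT)
  simp only [φ] at this
  linarith

lemma sum_sub_dotProduct_mulVec_le (hQ : IsAdaGradPreconditioner γ T Q δ) (hT : 1 ≤ T)
    {D : ℝ} {v : ℕ → m → ℝ} (hv : ∀ t ∈ Icc 1 T, v t ⬝ᵥ v t ≤ D ^ 2) :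
    ∑ t ∈ Icc 1 T, (v t ⬝ᵥ Q t *ᵥ v t - v (t + 1) ⬝ᵥ Q t *ᵥ v (t + 1)) ≤
      D ^ 2 * (Q T).trace := by
  have hbound : ∀ {A : Matrix m m ℝ} {t : ℕ}, A.PosSemidef → t ∈ Icc 1 T →
      v t ⬝ᵥ A *ᵥ v t ≤ D ^ 2 * A.trace := fun hA ht =>
    (hA.dotProduct_mulVec_le_trace_mul _).trans <| by
      rw [mul_comm]; exact mul_le_mul_of_nonneg_right (hv _ ht) hA.trace_nonneg
  have h1mem : 1 ∈ Icc 1 T := mem_Icc.mpr ⟨le_rfl, hT⟩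
  have hlast := (hQ.posSemidef T (mem_Icc.mpr ⟨hT, le_rfl⟩)).dotProduct_mulVec_nonneg (v (T + 1))
  rw [star_trivial] at hlast
  have := sum_Icc_sub_le_of_succ_sub_le (a := fun t => v t ⬝ᵥ Q t *ᵥ v t)
    (b := fun t => v (t + 1) ⬝ᵥ Q t *ᵥ v (t + 1)) (τ := fun t => D ^ 2 * (Q t).trace) hT
    (hbound (hQ.posSemidef 1 h1mem) h1mem) fun t ht => by
      have := hbound (hQ.le_succ ht) (add_one_mem_Icc_of_mem_Ico ht)
      rwa [sub_mulVec, dotProduct_sub, trace_sub, mul_sub] at this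
  linarith

end IsAdaGradPreconditioner

lemma nonneg_of_forall_mul_add_sq_mul_nonneg {a b : ℝ}
    (h : ∀ θ ∈ Set.Ioc (0 : ℝ) 1, 0 ≤ θ * a + θ ^ 2 * b) : 0 ≤ a := by
  have hlim : Tendsto (fun θ : ℝ => a + θ * b) (𝓝[>] 0) (𝓝 a) := by
    have : Tendsto (fun θ : ℝ => a + θ * b) (𝓝 0) (𝓝 (a + 0 * b)) :=
      tendsto_const_nhds.add (tendsto_id.mul_const b)
    simpa using this.mono_left nhdsWithin_le_nhds
  refine ge_of_tendsto hlim ?_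
  filter_upwards [Ioc_mem_nhdsGT one_pos] with θ hθ
  exact (mul_nonneg_iff_of_pos_left hθ.1).mp (by linarith [h θ hθ])

section QuadForm

variable {n : ℕ}

lemma quadForm_eq_dotProduct (Q : Matrix (Fin n) (Fin n) ℝ) (x : EuclideanSpace ℝ (Fin n)) :
    quadForm Q x = x.ofLp ⬝ᵥ Q *ᵥ x.ofLp := by
  simp only [quadForm, dotProduct, mulVec, Finset.mul_sum, mul_assoc]

lemma quadForm_add (Q : Matrix (Fin n) (Fin n) ℝ) (x y : EuclideanSpace ℝ (Fin n)) :
    quadForm Q (x + y) =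
      quadForm Q x + (x.ofLp ⬝ᵥ Q *ᵥ y.ofLp + y.ofLp ⬝ᵥ Q *ᵥ x.ofLp) + quadForm Q y := by
  simp only [quadForm_eq_dotProduct, WithLp.ofLp_add, mulVec_add, dotProduct_add,
    add_dotProduct]
  ring

lemma quadForm_smul (Q : Matrix (Fin n) (Fin n) ℝ) (c : ℝ) (x : EuclideanSpace ℝ (Fin n)) :
    quadForm Q (c • x) = c ^ 2 * quadForm Q x := by
  simp only [quadForm_eq_dotProduct, WithLp.ofLp_smul, mulVec_smul, dotProduct_smul,
    smul_dotProduct, smul_eq_mul]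
  ring

lemma quadForm_neg (Q : Matrix (Fin n) (Fin n) ℝ) (x : EuclideanSpace ℝ (Fin n)) :
    quadForm Q (-x) = quadForm Q x := by
  simpa using quadForm_smul Q (-1) x

lemma quadForm_nonneg {Q : Matrix (Fin n) (Fin n) ℝ} (hQ : Q.PosSemidef)
    (x : EuclideanSpace ℝ (Fin n)) : 0 ≤ quadForm Q x := by
  simpa [quadForm_eq_dotProduct] using hQ.dotProduct_mulVec_nonneg x.ofLp

lemma ofLp_dotProduct_ofLp_self (x : EuclideanSpace ℝ (Fin n)) :
    x.ofLp ⬝ᵥ x.ofLp = ‖x‖ ^ 2 := by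
  rw [← real_inner_self_eq_norm_sq, EuclideanSpace.inner_eq_star_dotProduct, star_trivial]

lemma IsMinOn.inner_add_quadForm_le {Ω : Set (EuclideanSpace ℝ (Fin n))} (hΩ : Convex ℝ Ω)
    {Q : Matrix (Fin n) (Fin n) ℝ} {c : ℝ} {h x u y : EuclideanSpace ℝ (Fin n)}
    (hmin : IsMinOn (fun z => ⟪h, z⟫ + c * quadForm Q (z - x)) Ω u) (hu : u ∈ Ω)
    (hy : y ∈ Ω) :
    ⟪h, u⟫ + c * quadForm Q (u - x) + c * quadForm Q (y - u) ≤
      ⟪h, y⟫ + c * quadForm Q (y - x) := by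
  -- on the segment from `u` to `y` the objective is a quadratic in `θ`, minimal at `θ = 0`
  set slope := ⟪h, y - u⟫ +
    c * ((u - x).ofLp ⬝ᵥ Q *ᵥ (y - u).ofLp + (y - u).ofLp ⬝ᵥ Q *ᵥ (u - x).ofLp)
  have hexpand : ∀ θ : ℝ, ⟪h, u + θ • (y - u)⟫ + c * quadForm Q (u + θ • (y - u) - x) =
      ⟪h, u⟫ + c * quadForm Q (u - x) + θ * slope + θ ^ 2 * (c * quadForm Q (y - u)) :=
    fun θ => by
      rw [show u + θ • (y - u) - x = (u - x) + θ • (y - u) by abel, quadForm_add,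
        quadForm_smul, inner_add_right, real_inner_smul_right]
      simp only [slope, WithLp.ofLp_smul, mulVec_smul, dotProduct_smul, smul_dotProduct,
        smul_eq_mul]
      ring
  have hslope : 0 ≤ slope :=
    nonneg_of_forall_mul_add_sq_mul_nonneg (b := c * quadForm Q (y - u)) fun θ hθ => by
      have := isMinOn_iff.mp hmin _ (hΩ.add_smul_sub_mem hu hy (Set.Ioc_subset_Icc_self hθ))
      rw [hexpand] at this
      linarith
  have hy' := hexpand 1
  rw [one_smul, add_sub_cancel] at hy'
  linarith

lemma inner_le_quadForm_add_quadForm_inv {Q : Matrix (Fin n) (Fin n) ℝ} (hQ : Q.PosDef)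
    {c : ℝ} (hc : 0 < c) (d w : EuclideanSpace ℝ (Fin n)) :
    ⟪d, w⟫ ≤ c * quadForm Q w + (4 * c)⁻¹ * quadForm Q⁻¹ d := by
  have hQinv : ∀ v : Fin n → ℝ, Q *ᵥ (Q⁻¹ *ᵥ v) = v := fun v => by
    rw [mulVec_mulVec, mul_nonsing_inv _ ((isUnit_iff_isUnit_det Q).mp hQ.isUnit), one_mulVec]
  have h := hQ.posSemidef.dotProduct_mulVec_nonneg ((2 * c) • w.ofLp - Q⁻¹ *ᵥ d.ofLp)
  simp only [star_trivial, mulVec_sub, mulVec_smul, hQinv, sub_dotProduct, dotProduct_sub,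
    smul_dotProduct, dotProduct_smul, smul_eq_mul,
    hQ.isHermitian.dotProduct_mulVec_comm (Q⁻¹ *ᵥ d.ofLp), dotProduct_comm (Q⁻¹ *ᵥ d.ofLp)] at h
  rw [quadForm_eq_dotProduct, quadForm_eq_dotProduct, EuclideanSpace.inner_eq_star_dotProduct,
    star_trivial, ← sub_nonneg]
  have hc4 : (4 * c)⁻¹ * (4 * c) = 1 := inv_mul_cancel₀ (by positivity)
  have := mul_nonneg (inv_nonneg.mpr (by positivity : (0 : ℝ) ≤ 4 * c)) h
  linear_combination this + (c * w.ofLp ⬝ᵥ Q *ᵥ w.ofLp - w.ofLp ⬝ᵥ d.ofLp) * hc4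

lemma optimistic_step_sub_le {Ω : Set (EuclideanSpace ℝ (Fin n))} (hΩ : Convex ℝ Ω)
    {Q : Matrix (Fin n) (Fin n) ℝ} (hQ : Q.PosDef) {c : ℝ} (hc : 0 < c)
    {f : EuclideanSpace ℝ (Fin n) → ℝ} {g g' x x' xh xs : EuclideanSpace ℝ (Fin n)}
    (hx' : x' ∈ Ω) (hxh : xh ∈ Ω) (hxs : xs ∈ Ω) (hsub : f xh + ⟪g, xs - xh⟫ ≤ f xs)
    (hhat : IsMinOn (fun z => ⟪g', z⟫ + c * quadForm Q (z - x)) Ω xh)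
    (hnext : IsMinOn (fun z => ⟪g, z⟫ + c * quadForm Q (z - x)) Ω x') :
    f xh - f xs ≤
      (4 * c)⁻¹ * quadForm Q⁻¹ (g - g') + c * (quadForm Q (xs - x) - quadForm Q (xs - x')) := by
  have hhat' := hhat.inner_add_quadForm_le hΩ hxh hx'
  have hnext' := hnext.inner_add_quadForm_le hΩ hx' hxs
  have hsq := inner_le_quadForm_add_quadForm_inv hQ hc (g - g') (xh - x')
  have hxh_nonneg := mul_nonneg hc.le (quadForm_nonneg hQ.posSemidef (xh - x))
  rw [show quadForm Q (xh - x') = quadForm Q (x' - xh) by rw [← neg_sub, quadForm_neg]] at hsq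
  simp only [inner_sub_left, inner_sub_right] at hsq hsub
  linarith

end QuadForm

theorem stmt_7 {n T : ℕ} (hT : 1 ≤ T) (D : ℝ) (hD : 0 < D)
    (Ω : Set (EuclideanSpace ℝ (Fin n))) (hΩ : Convex ℝ Ω)
    (hdiam : ∀ x ∈ Ω, ∀ y ∈ Ω, ‖x - y‖ ≤ D)
    (γ : ℝ) (hγ : 0 < γ)
    (g gtilde : ℕ → EuclideanSpace ℝ (Fin n))
    (hdom : ∀ t ∈ Finset.Icc 1 T,
      (γ^2 • (1 : Matrix (Fin n) (Fin n) ℝ) - outer (g t - gtilde t)).PosSemidef)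
    (Q : ℕ → Matrix (Fin n) (Fin n) ℝ)
    (hQpsd : ∀ t ∈ Finset.Icc 1 T, (Q t).PosSemidef)
    (hQsq : ∀ t ∈ Finset.Icc 1 T, Q t * Q t =
      γ^2 • (1 : Matrix (Fin n) (Fin n) ℝ) +
        ∑ s ∈ Finset.Icc 1 (t-1), outer (g s - gtilde s))
    (f : ℕ → EuclideanSpace ℝ (Fin n) → ℝ)
    (x xhat : ℕ → EuclideanSpace ℝ (Fin n))
    (hx : ∀ t ∈ Finset.Icc 1 (T+1), x t ∈ Ω)
    (hxhat : ∀ t ∈ Finset.Icc 1 T, xhat t ∈ Ω)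
    (hsub : ∀ t ∈ Finset.Icc 1 T, ∀ y ∈ Ω,
      f t (xhat t) + ⟪g t, y - xhat t⟫ ≤ f t y)
    (hhat : ∀ t ∈ Finset.Icc 1 T, IsMinOn
      (fun z => ⟪gtilde t, z⟫ + (1/(Real.sqrt 2 * D)) * quadForm (Q t) (z - x t)) Ω (xhat t))
    (hnext : ∀ t ∈ Finset.Icc 1 T, IsMinOn
      (fun z => ⟪g t, z⟫ + (1/(Real.sqrt 2 * D)) * quadForm (Q t) (z - x t)) Ω (x (t+1))) :
    ∀ xs ∈ Ω,
      ∑ t ∈ Finset.Icc 1 T, (f t (xhat t) - f t xs) ≤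
        Real.sqrt 2 * D * (Q T).trace := by
  intro xs hxs
  have hQ : IsAdaGradPreconditioner γ T Q fun t => (g t - gtilde t).ofLp := ⟨hQpsd, hQsq⟩
  set c := 1 / (Real.sqrt 2 * D)
  have hstep : ∀ t ∈ Icc 1 T, f t (xhat t) - f t xs ≤
      (4 * c)⁻¹ * quadForm (Q t)⁻¹ (g t - gtilde t) +
        c * (quadForm (Q t) (xs - x t) - quadForm (Q t) (xs - x (t + 1))) := fun t ht =>
    optimistic_step_sub_le hΩ (hQ.posDef hγ ht) (by positivity)
      (hx (t + 1) (by rw [mem_Icc] at ht ⊢; omega)) (hxhat t ht) hxs (hsub t ht xs hxs)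
      (hhat t ht) (hnext t ht)
  have hgrad : ∑ t ∈ Icc 1 T, quadForm (Q t)⁻¹ (g t - gtilde t) ≤ 2 * (Q T).trace := by
    simpa only [quadForm_eq_dotProduct] using hQ.sum_dotProduct_inv_mulVec_le hγ hT hdom
  have hdist : ∑ t ∈ Icc 1 T, (quadForm (Q t) (xs - x t) - quadForm (Q t) (xs - x (t + 1))) ≤
      D ^ 2 * (Q T).trace := by
    simp only [quadForm_eq_dotProduct]
    refine hQ.sum_sub_dotProduct_mulVec_le hT fun t ht => ?_
    rw [ofLp_dotProduct_ofLp_self]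
    exact pow_le_pow_left₀ (norm_nonneg _)
      (hdiam xs hxs (x t) (hx t (Icc_subset_Icc_right T.le_succ ht))) 2
  calc ∑ t ∈ Icc 1 T, (f t (xhat t) - f t xs)
      ≤ (4 * c)⁻¹ * ∑ t ∈ Icc 1 T, quadForm (Q t)⁻¹ (g t - gtilde t) +
          c * ∑ t ∈ Icc 1 T, (quadForm (Q t) (xs - x t) - quadForm (Q t) (xs - x (t + 1))) := by
        rw [mul_sum, mul_sum, ← sum_add_distrib]
        exact sum_le_sum hstep
    _ ≤ (4 * c)⁻¹ * (2 * (Q T).trace) + c * (D ^ 2 * (Q T).trace) := by gcongr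
    _ = Real.sqrt 2 * D * (Q T).trace := by
      simp only [c]
      field_simp
      rw [Real.sq_sqrt zero_le_two]
      ring
end

section
/- Let Ω ⊆ ℝ^n be a convex set with sup_{x,y∈Ω}‖x − y‖ ≤ 2R for some R > 0, let T ≥ 1, γ > 0, δ > 0, and H_1, …, H_T, λ_1, …, λ_T ∈ ℝ with 0 ≤ H_t ≤ γ and 0 ≤ λ_t ≤ δ for all t, and H_{1:t} + λ_{1:t} > 0 for all t ∈ [T]. Let f_1, …, f_T : ℝ^n → ℝ, x_1, …, x_{T+1} ∈ Ω, x̂_1, …, x̂_T ∈ Ω, and g_t, g̃_t ∈ ℝ^n be such that for each t: (i) f_t(y) ≥ f_t(x̂_t) + ⟨g_t, y − x̂_t⟩ + (H_t/2)‖y − x̂_t‖² for all y ∈ Ω; (ii) x̂_t is a minimizer over Ω of x ↦ ⟨g̃_t, x⟩ + ((H_{1:t−1} + λ_{1:t−1} + γ + δ)/4)‖x − x_t‖²; (iii) x_{t+1} is a minimizer over Ω of x ↦ ⟨g_t, x⟩ + ((H_{1:t−1} + λ_{1:t−1} + γ + δ)/4)‖x − x_t‖² (with H_{1:0} = λ_{1:0}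 := 0). Then for every x* ∈ Ω, ∑_{t=1}^T (f_t(x̂_t) − f_t(x*)) ≤ 2R²·λ_{1:T} + 3·∑_{t=1}^T ‖g_t − g̃_t‖²/(H_{1:t} + λ_{1:t}) + ((γ + δ)/4)‖x* − x_1‖². -/
/-!
Write ρ_t = H_{1:t-1} + λ_{1:t-1} + γ + δ for the prox weight of round t. The optimality
conditions of the two prox steps from x_t (one with the hint g̃_t, one with the true
gradient g_t) give the three-point inequality, which bounds ⟨g_t, x̂_t - x*⟩ by
‖g_t - g̃_t‖²/ρ_t plus the decrease of the potential from ρ_t/4 ‖x* - x_t‖² to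
ρ_t/4 ‖x* - x_{t+1}‖². Strong convexity adds a term -H_t/2 ‖x* - x̂_t‖²; together with the
stability of the prox map, ρ_t ‖x̂_t - x_{t+1}‖ ≤ 2 ‖g_t - g̃_t‖, it pays for raising the weight
of the new potential by H_t, and the diameter bound pays for raising it by λ_t. Since
ρ_t + H_t + λ_t = ρ_{t+1}, the potentials telescope; H_t ≤ γ and λ_t ≤ δ give
H_{1:t} + λ_{1:t} ≤ ρ_t.
-/

open scoped RealInnerProductSpace
open Finset

section Prox

variable {E : Type*} [NormedAddCommGroup E] [InnerProductSpace ℝ E] {Ω : Set E}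

theorem IsMinOn.inner_prox_nonneg (hΩ : Convex ℝ Ω) {g x w y : E} {c : ℝ} (hw : w ∈ Ω)
    (hy : y ∈ Ω) (hmin : IsMinOn (fun z => ⟪g, z⟫ + c * ‖z - x‖ ^ 2) Ω w) :
    0 ≤ ⟪g, y - w⟫ + 2 * c * ⟪w - x, y - w⟫ := by
  have hderiv := ((innerSL ℝ g).hasFDerivAt (x := w)).add
    (((hasFDerivAt_id w).sub_const x).norm_sq.const_mul c)
  have := hmin.localize.hasFDerivWithinAt_nonneg hderiv.hasFDerivWithinAt
    (sub_mem_posTangentConeAt_of_segment_subset (hΩ.segment_subset hw hy))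
  convert this using 1
  simp [inner_sub_left]
  ring

theorem IsMinOn.prox_three_point (hΩ : Convex ℝ Ω) {g x w y : E} {c : ℝ} (hw : w ∈ Ω)
    (hy : y ∈ Ω) (hmin : IsMinOn (fun z => ⟪g, z⟫ + c * ‖z - x‖ ^ 2) Ω w) :
    ⟪g, w⟫ + c * ‖w - x‖ ^ 2 + c * ‖y - w‖ ^ 2 ≤ ⟪g, y⟫ + c * ‖y - x‖ ^ 2 := by
  have hvi := hmin.inner_prox_nonneg hΩ hw hy
  have hsplit : ‖y - x‖ ^ 2 = ‖w - x‖ ^ 2 + 2 * ⟪w - x, y - w⟫ + ‖y - w‖ ^ 2 := by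
    rw [← norm_add_sq_real, sub_add_sub_cancel']
  rw [inner_sub_right] at hvi
  rw [hsplit]
  linarith

theorem prox_mul_norm_sub_le (hΩ : Convex ℝ Ω) {g g' x w w' : E} {c : ℝ} (hw : w ∈ Ω)
    (hw' : w' ∈ Ω) (hmin : IsMinOn (fun z => ⟪g, z⟫ + c * ‖z - x‖ ^ 2) Ω w)
    (hmin' : IsMinOn (fun z => ⟪g', z⟫ + c * ‖z - x‖ ^ 2) Ω w') :
    2 * c * ‖w - w'‖ ≤ ‖g - g'‖ := by
  have h := hmin.inner_prox_nonneg hΩ hw hw'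
  have h' := hmin'.inner_prox_nonneg hΩ hw' hw
  have hsum : 2 * c * ‖w - w'‖ ^ 2 ≤ ⟪g - g', w' - w⟫ := by
    have hgap : ⟪w - x, w' - w⟫ + ⟪w' - x, w - w'⟫ = -‖w - w'‖ ^ 2 := by
      rw [← real_inner_self_eq_norm_sq]
      simp only [inner_sub_left, inner_sub_right, real_inner_comm]
      ring
    have hg : ⟪g - g', w' - w⟫ = ⟪g, w' - w⟫ + ⟪g', w - w'⟫ := by
      simp only [inner_sub_left, inner_sub_right]
      ring
    linear_combination h + h' + 2 * c * hgap - hg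
  rcases (norm_nonneg (w - w')).eq_or_lt with h0 | hpos
  · simp [← h0]
  · refine le_of_mul_le_mul_right ?_ hpos
    calc 2 * c * ‖w - w'‖ * ‖w - w'‖ = 2 * c * ‖w - w'‖ ^ 2 := by ring
      _ ≤ ⟪g - g', w' - w⟫ := hsum
      _ ≤ ‖g - g'‖ * ‖w - w'‖ := norm_sub_rev w w' ▸ real_inner_le_norm _ _

theorem optimistic_prox_inner_le (hΩ : Convex ℝ Ω) {g m x x' xh y : E} {ρ : ℝ} (hρ : 0 < ρ)
    (hx' : x' ∈ Ω) (hxh : xh ∈ Ω) (hy : y ∈ Ω)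
    (hhat : IsMinOn (fun z => ⟪m, z⟫ + ρ / 4 * ‖z - x‖ ^ 2) Ω xh)
    (hnext : IsMinOn (fun z => ⟪g, z⟫ + ρ / 4 * ‖z - x‖ ^ 2) Ω x') :
    ⟪g, xh - y⟫ ≤ ‖g - m‖ ^ 2 / ρ + ρ / 4 * ‖y - x‖ ^ 2 - ρ / 4 * ‖y - x'‖ ^ 2 := by
  have hnext_y := hnext.prox_three_point hΩ hx' hy
  have hhat_x' := hhat.prox_three_point hΩ hxh hx'
  have hcross : ⟪g - m, xh - x'⟫ ≤ ‖g - m‖ ^ 2 / ρ + ρ / 4 * ‖x' - xh‖ ^ 2 := by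
    have hsq : 0 ≤ (‖g - m‖ - ρ / 2 * ‖x' - xh‖) ^ 2 / ρ := by positivity
    calc ⟪g - m, xh - x'⟫ ≤ ‖g - m‖ * ‖x' - xh‖ :=
          norm_sub_rev x' xh ▸ real_inner_le_norm _ _
      _ ≤ ‖g - m‖ ^ 2 / ρ + ρ / 4 * ‖x' - xh‖ ^ 2 := by
        have : (‖g - m‖ - ρ / 2 * ‖x' - xh‖) ^ 2 / ρ
            = ‖g - m‖ ^ 2 / ρ + ρ / 4 * ‖x' - xh‖ ^ 2 - ‖g - m‖ * ‖x' - xh‖ := by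
          field_simp
          ring
        linarith
  have hsplit : ⟪g, xh - y⟫ = ⟪g - m, xh - x'⟫ + ⟪m, xh⟫ - ⟪m, x'⟫ + ⟪g, x'⟫ - ⟪g, y⟫ := by
    simp only [inner_sub_left, inner_sub_right]
    ring
  have hdist : 0 ≤ ρ / 4 * ‖xh - x‖ ^ 2 := by positivity
  linarith

theorem optimistic_round_le {f : E → ℝ} (hΩ : Convex ℝ Ω) {g m x x' xh y : E}
    {ρ σ H μ R : ℝ} (hx' : x' ∈ Ω) (hxh : xh ∈ Ω) (hy : y ∈ Ω)
    (hhat : IsMinOn (fun z => ⟪m, z⟫ + ρ / 4 * ‖z - x‖ ^ 2) Ω xh)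
    (hnext : IsMinOn (fun z => ⟪g, z⟫ + ρ / 4 * ‖z - x‖ ^ 2) Ω x')
    (hsc : ∀ z ∈ Ω, f xh + ⟪g, z - xh⟫ + H / 2 * ‖z - xh‖ ^ 2 ≤ f z)
    (hH : 0 ≤ H) (hHρ : H ≤ ρ) (hσ : 0 < σ) (hσρ : σ ≤ ρ) (hμ : 0 ≤ μ)
    (hdiam : ‖y - x'‖ ≤ 2 * R) :
    f xh - f y ≤ 3 * (‖g - m‖ ^ 2 / σ) + 2 * R ^ 2 * μ
      + (ρ / 4 * ‖y - x‖ ^ 2 - (ρ + H + μ) / 4 * ‖y - x'‖ ^ 2) := by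
  have hρ : 0 < ρ := hσ.trans_le hσρ
  have hf := hsc y hy
  have hinner := optimistic_prox_inner_le hΩ hρ hx' hxh hy hhat hnext
  have hstab := prox_mul_norm_sub_le hΩ hxh hx' hhat hnext
  rw [norm_sub_rev m] at hstab
  set d := ‖g - m‖
  set e := ‖xh - x'‖
  have hstab_sq : H / 2 * e ^ 2 ≤ 2 * (d ^ 2 / σ) := by
    rw [← mul_div_assoc, le_div_iff₀ hσ]
    have hHσ : H * σ ≤ ρ ^ 2 := by nlinarith
    have : (ρ * e) ^ 2 ≤ (2 * d) ^ 2 := pow_le_pow_left₀ (by positivity) (by linarith) 2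
    nlinarith [sq_nonneg e]
  have htri : ‖y - x'‖ ^ 2 ≤ 2 * ‖y - xh‖ ^ 2 + 2 * e ^ 2 := by
    have := norm_sub_le_norm_sub_add_norm_sub y xh x'
    nlinarith [norm_nonneg (y - x'), sq_nonneg (‖y - xh‖ - e)]
  have hdiam_sq : ‖y - x'‖ ^ 2 ≤ 4 * R ^ 2 := by
    nlinarith [pow_le_pow_left₀ (norm_nonneg _) hdiam 2]
  have hρσ : d ^ 2 / ρ ≤ d ^ 2 / σ := div_le_div_of_nonneg_left (sq_nonneg d) hσ hσρ
  have hinner_sub : ⟪g, y - xh⟫ = -⟪g, xh - y⟫ := by rw [← inner_neg_right, neg_sub]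
  linarith [mul_le_mul_of_nonneg_left htri hH, mul_le_mul_of_nonneg_left hdiam_sq hμ,
    mul_nonneg hμ (sq_nonneg R)]

end Prox

theorem sum_Icc_one_eq_sum_Icc_pred_add {M : Type*} [AddCommMonoid M] (a : ℕ → M) {t : ℕ}
    (ht : 1 ≤ t) : ∑ s ∈ Icc 1 t, a s = ∑ s ∈ Icc 1 (t - 1), a s + a t := by
  obtain ⟨k, rfl⟩ := Nat.exists_eq_add_of_le' ht
  simpa using sum_Icc_succ_top (Nat.le_add_left 1 k) a

theorem sum_Icc_le_of_le_add_sub {M : Type*} [AddCommGroup M] [PartialOrder M]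
    [IsOrderedAddMonoid M] {a b Φ : ℕ → M} {T : ℕ}
    (h : ∀ t ∈ Icc 1 T, a t ≤ b t + (Φ t - Φ (t + 1))) (hΦ : 0 ≤ Φ (T + 1)) :
    ∑ t ∈ Icc 1 T, a t ≤ ∑ t ∈ Icc 1 T, b t + Φ 1 := by
  have htelescope : ∑ t ∈ Icc 1 T, (Φ t - Φ (t + 1)) = Φ 1 - Φ (T + 1) := by
    rw [← Ico_add_one_right_eq_Icc, ← neg_sub, ← sum_Ico_sub Φ (Nat.le_add_left 1 T),
      ← sum_neg_distrib]
    simp only [neg_sub]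
  calc ∑ t ∈ Icc 1 T, a t ≤ ∑ t ∈ Icc 1 T, (b t + (Φ t - Φ (t + 1))) := sum_le_sum h
    _ = ∑ t ∈ Icc 1 T, b t + Φ 1 - Φ (T + 1) := by rw [sum_add_distrib, htelescope, add_sub_assoc]
    _ ≤ ∑ t ∈ Icc 1 T, b t + Φ 1 := sub_le_self _ hΦ

theorem stmt_9_general {n T : ℕ}
    (Ω : Set (EuclideanSpace ℝ (Fin n))) (hΩ : Convex ℝ Ω)
    (R : ℝ) (hdiam : ∀ x ∈ Ω, ∀ y ∈ Ω, ‖x - y‖ ≤ 2*R)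
    (γ δ : ℝ) (hγ : 0 < γ) (hδ : 0 < δ) (H lam : ℕ → ℝ)
    (hHnn : ∀ t ∈ Finset.Icc 1 T, 0 ≤ H t)
    (hHγ : ∀ t ∈ Finset.Icc 1 T, H t ≤ γ)
    (hlamnn : ∀ t ∈ Finset.Icc 1 T, 0 ≤ lam t)
    (hlamδ : ∀ t ∈ Finset.Icc 1 T, lam t ≤ δ)
    (hpos : ∀ t ∈ Finset.Icc 1 T,
      0 < (∑ s ∈ Finset.Icc 1 t, H s) + (∑ s ∈ Finset.Icc 1 t, lam s))
    (f : ℕ → EuclideanSpace ℝ (Fin n) → ℝ)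
    (x xhat g gtilde : ℕ → EuclideanSpace ℝ (Fin n))
    (hx : ∀ t ∈ Finset.Icc 1 (T+1), x t ∈ Ω)
    (hxhat : ∀ t ∈ Finset.Icc 1 T, xhat t ∈ Ω)
    (hsc : ∀ t ∈ Finset.Icc 1 T, ∀ y ∈ Ω,
      f t (xhat t) + ⟪g t, y - xhat t⟫ + (H t / 2) * ‖y - xhat t‖^2 ≤ f t y)
    (hhat : ∀ t ∈ Finset.Icc 1 T, IsMinOn
      (fun z => ⟪gtilde t, z⟫ +
        ((∑ s ∈ Finset.Icc 1 (t-1), H s) + (∑ s ∈ Finset.Icc 1 (t-1), lam s) + γ + δ)/4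
          * ‖z - x t‖^2) Ω (xhat t))
    (hnext : ∀ t ∈ Finset.Icc 1 T, IsMinOn
      (fun z => ⟪g t, z⟫ +
        ((∑ s ∈ Finset.Icc 1 (t-1), H s) + (∑ s ∈ Finset.Icc 1 (t-1), lam s) + γ + δ)/4
          * ‖z - x t‖^2) Ω (x (t+1))) :
    ∀ xs ∈ Ω,
      ∑ t ∈ Finset.Icc 1 T, (f t (xhat t) - f t xs) ≤
        2*R^2 * (∑ t ∈ Finset.Icc 1 T, lam t)
        + 3 * ∑ t ∈ Finset.Icc 1 T, ‖g t - gtilde t‖^2 /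
            ((∑ s ∈ Finset.Icc 1 t, H s) + (∑ s ∈ Finset.Icc 1 t, lam s))
        + ((γ + δ)/4) * ‖xs - x 1‖^2 := by
  intro xs hxs
  set ρ : ℕ → ℝ := fun k =>
    (∑ s ∈ Icc 1 (k - 1), H s) + (∑ s ∈ Icc 1 (k - 1), lam s) + γ + δ with hρ_def
  have hprefix_nonneg (k : ℕ) (hk : k ≤ T) : 0 ≤ (∑ s ∈ Icc 1 k, H s) + ∑ s ∈ Icc 1 k, lam s :=
    add_nonneg (sum_nonneg fun s hs => hHnn s (Icc_subset_Icc_right hk hs))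
      (sum_nonneg fun s hs => hlamnn s (Icc_subset_Icc_right hk hs))
  have hround : ∀ t ∈ Icc 1 T, f t (xhat t) - f t xs ≤
      (3 * (‖g t - gtilde t‖ ^ 2 / ((∑ s ∈ Icc 1 t, H s) + (∑ s ∈ Icc 1 t, lam s)))
        + 2 * R ^ 2 * lam t)
        + (ρ t / 4 * ‖xs - x t‖ ^ 2 - ρ (t + 1) / 4 * ‖xs - x (t + 1)‖ ^ 2) := by
    intro t ht
    obtain ⟨ht1, htT⟩ := mem_Icc.mp ht
    have hx_succ : x (t + 1) ∈ Ω := hx _ (mem_Icc.mpr ⟨by omega, by omega⟩)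
    have hσ_eq := congrArg₂ (· + ·) (sum_Icc_one_eq_sum_Icc_pred_add H ht1)
      (sum_Icc_one_eq_sum_Icc_pred_add lam ht1)
    have hρ_succ : ρ (t + 1) = ρ t + H t + lam t := by
      simp only [hρ_def, Nat.add_sub_cancel] at hσ_eq ⊢
      linarith
    have hprev := hprefix_nonneg (t - 1) (by omega)
    rw [hρ_succ]
    exact optimistic_round_le hΩ hx_succ (hxhat _ ht) hxs (hhat _ ht) (hnext _ ht) (hsc _ ht)
      (hHnn _ ht) (by linarith [hHγ _ ht]) (hpos _ ht) (by linarith [hHγ _ ht, hlamδ _ ht])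
      (hlamnn _ ht) (hdiam _ hxs _ hx_succ)
  have hlast : 0 ≤ ρ (T + 1) / 4 * ‖xs - x (T + 1)‖ ^ 2 := by
    have hall := hprefix_nonneg T le_rfl
    simp only [hρ_def, Nat.add_sub_cancel]
    positivity
  refine (sum_Icc_le_of_le_add_sub hround hlast).trans_eq ?_
  simp only [sum_add_distrib, ← mul_sum, hρ_def, Nat.sub_self, Icc_eq_empty_of_lt zero_lt_one,
    sum_empty]
  ring

theorem stmt_9 {n T : ℕ} (hT : 1 ≤ T)
    (Ω : Set (EuclideanSpace ℝ (Fin n))) (hΩ : Convex ℝ Ω)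
    (R : ℝ) (hR : 0 < R) (hdiam : ∀ x ∈ Ω, ∀ y ∈ Ω, ‖x - y‖ ≤ 2*R)
    (γ δ : ℝ) (hγ : 0 < γ) (hδ : 0 < δ) (H lam : ℕ → ℝ)
    (hHnn : ∀ t ∈ Finset.Icc 1 T, 0 ≤ H t)
    (hHγ : ∀ t ∈ Finset.Icc 1 T, H t ≤ γ)
    (hlamnn : ∀ t ∈ Finset.Icc 1 T, 0 ≤ lam t)
    (hlamδ : ∀ t ∈ Finset.Icc 1 T, lam t ≤ δ)
    (hpos : ∀ t ∈ Finset.Icc 1 T,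
      0 < (∑ s ∈ Finset.Icc 1 t, H s) + (∑ s ∈ Finset.Icc 1 t, lam s))
    (f : ℕ → EuclideanSpace ℝ (Fin n) → ℝ)
    (x xhat g gtilde : ℕ → EuclideanSpace ℝ (Fin n))
    (hx : ∀ t ∈ Finset.Icc 1 (T+1), x t ∈ Ω)
    (hxhat : ∀ t ∈ Finset.Icc 1 T, xhat t ∈ Ω)
    (hsc : ∀ t ∈ Finset.Icc 1 T, ∀ y ∈ Ω,
      f t (xhat t) + ⟪g t, y - xhat t⟫ + (H t / 2) * ‖y - xhat t‖^2 ≤ f t y)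
    (hhat : ∀ t ∈ Finset.Icc 1 T, IsMinOn
      (fun z => ⟪gtilde t, z⟫ +
        ((∑ s ∈ Finset.Icc 1 (t-1), H s) + (∑ s ∈ Finset.Icc 1 (t-1), lam s) + γ + δ)/4
          * ‖z - x t‖^2) Ω (xhat t))
    (hnext : ∀ t ∈ Finset.Icc 1 T, IsMinOn
      (fun z => ⟪g t, z⟫ +
        ((∑ s ∈ Finset.Icc 1 (t-1), H s) + (∑ s ∈ Finset.Icc 1 (t-1), lam s) + γ + δ)/4
          * ‖z - x t‖^2) Ω (x (t+1))) :
    ∀ xs ∈ Ω,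
      ∑ t ∈ Finset.Icc 1 T, (f t (xhat t) - f t xs) ≤
        2*R^2 * (∑ t ∈ Finset.Icc 1 T, lam t)
        + 3 * ∑ t ∈ Finset.Icc 1 T, ‖g t - gtilde t‖^2 /
            ((∑ s ∈ Finset.Icc 1 t, H s) + (∑ s ∈ Finset.Icc 1 t, lam s))
        + ((γ + δ)/4) * ‖xs - x 1‖^2 :=
  stmt_9_general Ω hΩ R hdiam γ δ hγ hδ H lam hHnn hHγ hlamnn hlamδ hpos f x xhat g gtilde hx hxhat
    hsc hhat hnext
end

section
/- Let Ω ⊆ ℝ^n be a convex set with sup_{x,y∈Ω}‖x − y‖ ≤ 2R for some R > 0, let T ≥ 1, γ > 0, δ > 0, and H_1, …, H_T ∈ ℝ with 0 ≤ H_t ≤ γ for all t. Let f_1, …, f_T : ℝ^n → ℝ, x_1, …, x_{T+1} ∈ Ω, x̂_1, …, x̂_T ∈ Ω, and g_t, g̃_t ∈ ℝ^n, and define recursively λ_t := (sqrt((H_{1:t} + λ_{1:t−1})² + 6‖g_t − g̃_t‖²/R²) − (H_{1:t} + λ_{1:t−1}))/2 for t = 1, …, T (with λ_{1:0} := 0);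 assume λ_t ≤ δ and H_{1:t} + λ_{1:t} > 0 for all t ∈ [T]. Suppose for each t: (i) f_t(y) ≥ f_t(x̂_t) + ⟨g_t, y − x̂_t⟩ + (H_t/2)‖y − x̂_t‖² for all y ∈ Ω; (ii) x̂_t is a minimizer over Ω of x ↦ ⟨g̃_t, x⟩ + ((H_{1:t−1} + λ_{1:t−1} + γ + δ)/4)‖x − x_t‖²; (iii) x_{t+1} is a minimizer over Ω of x ↦ ⟨g_t, x⟩ + ((H_{1:t−1} + λ_{1:t−1} + γ + δ)/4)‖x − x_t‖². Then for every x* ∈ Ω and every λ*_1, …, λ*_T ≥ 0 with H_{1:t} + λ*_{1:t} > 0 for all t, ∑_{t=1}^T (f_t(x̂_t) − f_t(x*)) ≤ ((γ + δ)/4)‖x* − x_1‖² + 2·(2R²·λ*_{1:T} + 3·∑_{t=1}^T ‖g_t − g̃_t‖²/(H_{1:t} + λ*_{1:t})). -/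
open scoped RealInnerProductSpace
open Finset

/-!
Optimistic mirror descent with quadratic regularizers. By the three-point inequality for the two
proximal steps and the strong convexity of `f t`, the regret of round `t` is at most a telescoping
difference of `B t * ‖x⋆ - x t‖²` (with `B t` the current coefficient of the regularizer) plus the
stability term `‖g t - g̃ t‖ * ‖x̂ t - x (t+1)‖`; since the proximal map is `1/(2 B t)`-Lipschitz in
the linear term, this is `O(‖g t - g̃ t‖² / (H_{1:t} + λ_{1:t}))`. Paying the growth `λ t` of the
regularizer with the diameter leaves `2R² λ t + 3 ‖g t - g̃ t‖² / (H_{1:t} + λ_{1:t})`, and `λ t` is the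
root that makes both terms equal; such a balanced choice is within a factor 2 of every `λ⋆`.
-/

section ProximalStep

variable {E : Type*} [NormedAddCommGroup E] [InnerProductSpace ℝ E] {Ω : Set E}

theorem inner_add_mul_norm_sq_le_of_isMinOn (hΩ : Convex ℝ Ω) {v x₀ z y : E} {β : ℝ}
    (hmin : IsMinOn (fun w => ⟪v, w⟫ + β * ‖w - x₀‖ ^ 2) Ω z) (hz : z ∈ Ω) (hy : y ∈ Ω) :
    ⟪v, z⟫ + β * ‖z - x₀‖ ^ 2 + β * ‖y - z‖ ^ 2 ≤ ⟪v, y⟫ + β * ‖y - x₀‖ ^ 2 := by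
  have hderiv : HasFDerivAt (fun w => ⟪v, w⟫ + β * ‖w - x₀‖ ^ 2)
      (innerSL ℝ v + β • (2 • innerSL ℝ (z - x₀) ∘SL ContinuousLinearMap.id ℝ E)) z :=
    (innerSL ℝ v).hasFDerivAt.add (((hasFDerivAt_id z).sub_const x₀).norm_sq.const_mul β)
  have hfirst_order : 0 ≤ ⟪v, y - z⟫ + β * (2 * ⟪z - x₀, y - z⟫) := by
    simpa [inner_sub_left] using
      hmin.localize.hasFDerivWithinAt_nonneg hderiv.hasFDerivWithinAt
        (sub_mem_posTangentConeAt_of_segment_subset (hΩ.segment_subset hz hy))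
  have hexpand : ‖y - x₀‖ ^ 2 = ‖z - x₀‖ ^ 2 + 2 * ⟪z - x₀, y - z⟫ + ‖y - z‖ ^ 2 := by
    rw [← norm_add_sq_real]; abel_nf
  rw [inner_sub_right] at hfirst_order
  linear_combination hfirst_order - β * hexpand

theorem two_mul_mul_norm_sub_le_of_isMinOn (hΩ : Convex ℝ Ω) {v w x₀ z z' : E} {β : ℝ}
    (hmin : IsMinOn (fun u => ⟪v, u⟫ + β * ‖u - x₀‖ ^ 2) Ω z)
    (hmin' : IsMinOn (fun u => ⟪w, u⟫ + β * ‖u - x₀‖ ^ 2) Ω z') (hz : z ∈ Ω) (hz' : z' ∈ Ω) :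
    2 * β * ‖z - z'‖ ≤ ‖v - w‖ := by
  have h := inner_add_mul_norm_sq_le_of_isMinOn hΩ hmin hz hz'
  have h' := inner_add_mul_norm_sq_le_of_isMinOn hΩ hmin' hz' hz
  have hcs := real_inner_le_norm (v - w) (z' - z)
  simp only [inner_sub_left, inner_sub_right] at hcs
  rw [norm_sub_rev z' z] at h hcs
  rcases (norm_nonneg (z - z')).eq_or_lt with hzero | hpos
  · rw [← hzero, mul_zero]; exact norm_nonneg _
  · refine le_of_mul_le_mul_right ?_ hpos
    linear_combination h + h' + hcs

theorem optimistic_step_le_s10 {f : E → ℝ} {g g' x z x' y : E} {β a : ℝ} (hΩ : Convex ℝ Ω)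
    (hβ : 0 ≤ β) (hsc : ∀ y ∈ Ω, f z + ⟪g, y - z⟫ + a / 2 * ‖y - z‖ ^ 2 ≤ f y)
    (hhat : IsMinOn (fun u => ⟪g', u⟫ + β * ‖u - x‖ ^ 2) Ω z)
    (hnext : IsMinOn (fun u => ⟪g, u⟫ + β * ‖u - x‖ ^ 2) Ω x')
    (hz : z ∈ Ω) (hx' : x' ∈ Ω) (hy : y ∈ Ω) :
    f z - f y ≤ β * (‖y - x‖ ^ 2 - ‖y - x'‖ ^ 2) + ‖g - g'‖ * ‖z - x'‖
      - β * ‖z - x'‖ ^ 2 - a / 2 * ‖y - z‖ ^ 2 := by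
  have hz_opt := inner_add_mul_norm_sq_le_of_isMinOn hΩ hhat hz hx'
  have hx'_opt := inner_add_mul_norm_sq_le_of_isMinOn hΩ hnext hx' hy
  have hcs := real_inner_le_norm (g - g') (z - x')
  have hlin := hsc y hy
  simp only [inner_sub_left, inner_sub_right] at hcs hlin
  rw [norm_sub_rev x' z] at hz_opt
  nlinarith [mul_nonneg hβ (sq_nonneg ‖z - x‖)]

theorem optimistic_round_le_s10 {f : E → ℝ} {g g' x z x' y : E} {β a l D R : ℝ}
    (hΩ : Convex ℝ Ω) (ha : 0 ≤ a) (hl : 0 ≤ l) (hD : 0 < D) (hDβ : D ≤ 4 * β)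
    (hal : a + l ≤ 4 * β) (hyz : ‖y - z‖ ≤ 2 * R)
    (hsc : ∀ y ∈ Ω, f z + ⟪g, y - z⟫ + a / 2 * ‖y - z‖ ^ 2 ≤ f y)
    (hhat : IsMinOn (fun u => ⟪g', u⟫ + β * ‖u - x‖ ^ 2) Ω z)
    (hnext : IsMinOn (fun u => ⟪g, u⟫ + β * ‖u - x‖ ^ 2) Ω x')
    (hz : z ∈ Ω) (hx' : x' ∈ Ω) (hy : y ∈ Ω) :
    f z - f y ≤ β * ‖y - x‖ ^ 2 - (β + (a + l) / 4) * ‖y - x'‖ ^ 2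
      + (2 * R ^ 2 * l + 3 * ‖g - g'‖ ^ 2 / D) := by
  have hβ : 0 ≤ β := by linarith
  have hd : 0 ≤ ‖z - x'‖ := norm_nonneg _
  have hstep := optimistic_step_le_s10 hΩ hβ hsc hhat hnext hz hx' hy
  have hstab : 2 * β * ‖z - x'‖ ≤ ‖g - g'‖ := by
    rw [norm_sub_rev g]
    exact two_mul_mul_norm_sub_le_of_isMinOn hΩ hhat hnext hz hx'
  have htri : ‖y - x'‖ ^ 2 ≤ 2 * (‖y - z‖ ^ 2 + ‖z - x'‖ ^ 2) :=
    (pow_le_pow_left₀ (norm_nonneg _) (norm_sub_le_norm_sub_add_norm_sub y z x') 2).trans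
      add_sq_le
  have hdiam : ‖y - z‖ ^ 2 ≤ 4 * R ^ 2 := by
    nlinarith [pow_le_pow_left₀ (norm_nonneg _) hyz 2]
  have hGd : ‖g - g'‖ * ‖z - x'‖ ≤ 2 * ‖g - g'‖ ^ 2 / D := by
    have hDd : D * ‖z - x'‖ ≤ 2 * ‖g - g'‖ := by
      nlinarith [mul_le_mul_of_nonneg_right hDβ hd]
    rw [le_div_iff₀ hD]
    nlinarith [mul_le_mul_of_nonneg_left hDd (norm_nonneg (g - g'))]
  linear_combination hstep + mul_le_mul_of_nonneg_left htri (by linarith : 0 ≤ (a + l) / 4)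
    + mul_le_mul_of_nonneg_left hdiam hl / 2 + mul_le_mul_of_nonneg_right hstab hd / 2
    + mul_le_mul_of_nonneg_right hal (sq_nonneg ‖z - x'‖) / 2 + 3 / 2 * hGd

end ProximalStep

theorem mul_eq_div_of_eq_sqrt {a l q R : ℝ} (hR : R ≠ 0) (hpos : 0 < a + l) (hq : 0 ≤ q)
    (hl : l = (√(a ^ 2 + 6 * q / R ^ 2) - a) / 2) : 2 * R ^ 2 * l = 3 * q / (a + l) := by
  have hsq := Real.sq_sqrt (by positivity : 0 ≤ a ^ 2 + 6 * q / R ^ 2)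
  rw [eq_div_iff hpos.ne']
  subst hl
  field_simp at hsq ⊢
  linear_combination hsq

theorem sum_Icc_one_eq_sum_Icc_sub_one_add {M : Type*} [AddCommMonoid M] (F : ℕ → M) {t : ℕ}
    (ht : 1 ≤ t) : ∑ s ∈ Icc 1 t, F s = ∑ s ∈ Icc 1 (t - 1), F s + F t := by
  obtain ⟨t, rfl⟩ := Nat.exists_eq_add_of_le' ht
  rw [sum_Icc_succ_top (by omega), Nat.add_sub_cancel]

theorem sum_le_add_sum_of_le_sub_add {r φ w : ℕ → ℝ} {T : ℕ}
    (h : ∀ t ∈ Icc 1 T, r t ≤ φ t - φ (t + 1) + w t) (hφ : 0 ≤ φ (T + 1)) :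
    ∑ t ∈ Icc 1 T, r t ≤ φ 1 + ∑ t ∈ Icc 1 T, w t := by
  have htel := sum_Ico_sub φ (by omega : 1 ≤ T + 1)
  rw [Ico_add_one_right_eq_Icc] at htel
  have hsum := sum_le_sum h
  rw [sum_add_distrib, sum_sub_distrib] at hsum
  rw [sum_sub_distrib] at htel
  linarith

section Balancing

variable {lam lam' : ℕ → ℝ} {T : ℕ}

theorem sum_filter_sum_lt_le (hlam : ∀ t ∈ Icc 1 T, 0 ≤ lam t)
    (hlam' : ∀ t ∈ Icc 1 T, 0 ≤ lam' t) :
    ∑ t ∈ Icc 1 T with ∑ s ∈ Icc 1 t, lam s < ∑ s ∈ Icc 1 t, lam' s, lam t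
      ≤ ∑ t ∈ Icc 1 T, lam' t := by
  set S := {t ∈ Icc 1 T | ∑ s ∈ Icc 1 t, lam s < ∑ s ∈ Icc 1 t, lam' s}
  rcases S.eq_empty_or_nonempty with hS | hS
  · rw [hS, sum_empty]
    exact sum_nonneg hlam'
  have hm := mem_filter.mp (S.max'_mem hS)
  have hmT : S.max' hS ≤ T := (mem_Icc.mp hm.1).2
  calc ∑ t ∈ S, lam t ≤ ∑ t ∈ Icc 1 (S.max' hS), lam t := by
        refine sum_le_sum_of_subset_of_nonneg (fun t ht => ?_) (fun t ht _ => hlam t ?_)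
        · exact mem_Icc.mpr ⟨(mem_Icc.mp (mem_filter.mp ht).1).1, S.le_max' t ht⟩
        · exact Icc_subset_Icc_right hmT ht
    _ ≤ ∑ t ∈ Icc 1 (S.max' hS), lam' t := hm.2.le
    _ ≤ ∑ t ∈ Icc 1 T, lam' t :=
        sum_le_sum_of_subset_of_nonneg (Icc_subset_Icc_right hmT) (fun t ht _ => hlam' t ht)

/-- In the rounds with `λ_{1:t} ≥ λ'_{1:t}` the denominator only shrinks when passing to `λ'`; the
other rounds are charged to `λ'` by `sum_filter_sum_lt_le`. -/
theorem sum_balanced_le_two_mul {A c : ℕ → ℝ} {C : ℝ} (hC : 0 ≤ C)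
    (hc : ∀ t ∈ Icc 1 T, 0 ≤ c t) (hlam : ∀ t ∈ Icc 1 T, 0 ≤ lam t)
    (hlam' : ∀ t ∈ Icc 1 T, 0 ≤ lam' t)
    (hpos' : ∀ t ∈ Icc 1 T, 0 < A t + ∑ s ∈ Icc 1 t, lam' s)
    (hbal : ∀ t ∈ Icc 1 T, C * lam t = c t / (A t + ∑ s ∈ Icc 1 t, lam s)) :
    ∑ t ∈ Icc 1 T, (C * lam t + c t / (A t + ∑ s ∈ Icc 1 t, lam s))
      ≤ 2 * (C * ∑ t ∈ Icc 1 T, lam' t + ∑ t ∈ Icc 1 T, c t / (A t + ∑ s ∈ Icc 1 t, lam' s)) := by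
  have hterm : ∀ t ∈ Icc 1 T, C * lam t + c t / (A t + ∑ s ∈ Icc 1 t, lam s)
      ≤ 2 * C * (if ∑ s ∈ Icc 1 t, lam s < ∑ s ∈ Icc 1 t, lam' s then lam t else 0)
        + 2 * (c t / (A t + ∑ s ∈ Icc 1 t, lam' s)) := by
    intro t ht
    have hc' : 0 ≤ c t / (A t + ∑ s ∈ Icc 1 t, lam' s) := div_nonneg (hc t ht) (hpos' t ht).le
    split_ifs with hlt
    · linarith [hbal t ht]
    · have hle : c t / (A t + ∑ s ∈ Icc 1 t, lam s) ≤ c t / (A t + ∑ s ∈ Icc 1 t, lam' s) :=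
        div_le_div_of_nonneg_left (hc t ht) (hpos' t ht) (by linarith [not_lt.mp hlt])
      linarith [hbal t ht]
  calc _ ≤ _ := sum_le_sum hterm
    _ = 2 * C * ∑ t ∈ Icc 1 T with ∑ s ∈ Icc 1 t, lam s < ∑ s ∈ Icc 1 t, lam' s, lam t
        + 2 * ∑ t ∈ Icc 1 T, c t / (A t + ∑ s ∈ Icc 1 t, lam' s) := by
      rw [sum_add_distrib, sum_filter, mul_sum, mul_sum]
    _ ≤ _ := by
      linarith [mul_le_mul_of_nonneg_left (sum_filter_sum_lt_le hlam hlam') hC]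

end Balancing

theorem stmt_10_general {n T : ℕ}
    (Ω : Set (EuclideanSpace ℝ (Fin n))) (hΩ : Convex ℝ Ω)
    (R : ℝ) (hR : 0 < R) (hdiam : ∀ x ∈ Ω, ∀ y ∈ Ω, ‖x - y‖ ≤ 2*R)
    (γ δ : ℝ) (hγ : 0 < γ) (hδ : 0 < δ) (H lam : ℕ → ℝ)
    (hHnn : ∀ t ∈ Finset.Icc 1 T, 0 ≤ H t)
    (hHγ : ∀ t ∈ Finset.Icc 1 T, H t ≤ γ)
    (f : ℕ → EuclideanSpace ℝ (Fin n) → ℝ)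
    (x xhat g gtilde : ℕ → EuclideanSpace ℝ (Fin n))
    (hlamrec : ∀ t ∈ Finset.Icc 1 T, lam t =
      (Real.sqrt (((∑ s ∈ Finset.Icc 1 t, H s) + (∑ s ∈ Finset.Icc 1 (t-1), lam s))^2
          + 6 * ‖g t - gtilde t‖^2 / R^2)
        - ((∑ s ∈ Finset.Icc 1 t, H s) + (∑ s ∈ Finset.Icc 1 (t-1), lam s))) / 2)
    (hlamδ : ∀ t ∈ Finset.Icc 1 T, lam t ≤ δ)
    (hpos : ∀ t ∈ Finset.Icc 1 T,
      0 < (∑ s ∈ Finset.Icc 1 t, H s) + (∑ s ∈ Finset.Icc 1 t, lam s))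
    (hx : ∀ t ∈ Finset.Icc 1 (T+1), x t ∈ Ω)
    (hxhat : ∀ t ∈ Finset.Icc 1 T, xhat t ∈ Ω)
    (hsc : ∀ t ∈ Finset.Icc 1 T, ∀ y ∈ Ω,
      f t (xhat t) + ⟪g t, y - xhat t⟫ + (H t / 2) * ‖y - xhat t‖^2 ≤ f t y)
    (hhat : ∀ t ∈ Finset.Icc 1 T, IsMinOn
      (fun z => ⟪gtilde t, z⟫ +
        ((∑ s ∈ Finset.Icc 1 (t-1), H s) + (∑ s ∈ Finset.Icc 1 (t-1), lam s) + γ + δ)/4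
          * ‖z - x t‖^2) Ω (xhat t))
    (hnext : ∀ t ∈ Finset.Icc 1 T, IsMinOn
      (fun z => ⟪g t, z⟫ +
        ((∑ s ∈ Finset.Icc 1 (t-1), H s) + (∑ s ∈ Finset.Icc 1 (t-1), lam s) + γ + δ)/4
          * ‖z - x t‖^2) Ω (x (t+1))) :
    ∀ xs ∈ Ω, ∀ lamstar : ℕ → ℝ,
      (∀ t ∈ Finset.Icc 1 T, 0 ≤ lamstar t) →
      (∀ t ∈ Finset.Icc 1 T,
        0 < (∑ s ∈ Finset.Icc 1 t, H s) + (∑ s ∈ Finset.Icc 1 t, lamstar s)) →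
      ∑ t ∈ Finset.Icc 1 T, (f t (xhat t) - f t xs) ≤
        ((γ + δ)/4) * ‖xs - x 1‖^2
        + 2 * (2*R^2 * (∑ t ∈ Finset.Icc 1 T, lamstar t)
          + 3 * ∑ t ∈ Finset.Icc 1 T, ‖g t - gtilde t‖^2 /
              ((∑ s ∈ Finset.Icc 1 t, H s) + (∑ s ∈ Finset.Icc 1 t, lamstar s))) := by
  intro xs hxs lamstar hlamstar hposstar
  have hbal : ∀ t ∈ Icc 1 T, 2 * R ^ 2 * lam t
      = 3 * ‖g t - gtilde t‖ ^ 2 / ((∑ s ∈ Icc 1 t, H s) + (∑ s ∈ Icc 1 t, lam s)) := by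
    intro t ht
    have hD := hpos t ht
    rw [sum_Icc_one_eq_sum_Icc_sub_one_add lam (mem_Icc.mp ht).1, ← add_assoc] at hD ⊢
    exact mul_eq_div_of_eq_sqrt hR.ne' hD (by positivity) (hlamrec t ht)
  have hlam : ∀ t ∈ Icc 1 T, 0 ≤ lam t := fun t ht =>
    nonneg_of_mul_nonneg_right
      (by rw [hbal t ht]; exact div_nonneg (by positivity) (hpos t ht).le) (by positivity)
  have hsum_nonneg : ∀ t ≤ T, 0 ≤ (∑ s ∈ Icc 1 t, H s) + (∑ s ∈ Icc 1 t, lam s) := fun t htT =>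
    add_nonneg (sum_nonneg fun s hs => hHnn s (Icc_subset_Icc_right htT hs))
      (sum_nonneg fun s hs => hlam s (Icc_subset_Icc_right htT hs))
  set B : ℕ → ℝ := fun t => ((∑ s ∈ Icc 1 (t-1), H s) + (∑ s ∈ Icc 1 (t-1), lam s) + γ + δ) / 4
    with hB
  have hround : ∀ t ∈ Icc 1 T, f t (xhat t) - f t xs
      ≤ B t * ‖xs - x t‖ ^ 2 - B (t + 1) * ‖xs - x (t + 1)‖ ^ 2
        + (2 * R ^ 2 * lam t
          + 3 * ‖g t - gtilde t‖ ^ 2 / ((∑ s ∈ Icc 1 t, H s) + (∑ s ∈ Icc 1 t, lam s))) := by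
    intro t ht
    obtain ⟨ht1, htT⟩ := mem_Icc.mp ht
    have hsplitH := sum_Icc_one_eq_sum_Icc_sub_one_add H ht1
    have hsplitlam := sum_Icc_one_eq_sum_Icc_sub_one_add lam ht1
    have hprev := hsum_nonneg (t - 1) (by omega)
    have hBsucc : B (t + 1) = B t + (H t + lam t) / 4 := by
      simp only [hB, Nat.add_sub_cancel, hsplitH, hsplitlam]; ring
    rw [hBsucc]
    refine optimistic_round_le_s10 hΩ (hHnn t ht) (hlam t ht) (hpos t ht) ?_ ?_
      (hdiam xs hxs (xhat t) (hxhat t ht)) (hsc t ht) (hhat t ht) (hnext t ht) (hxhat t ht)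
      (hx (t + 1) (mem_Icc.mpr ⟨by omega, by omega⟩)) hxs
    all_goals simp only [hB, hsplitH, hsplitlam]; linarith [hHγ t ht, hlamδ t ht]
  have hBT : 0 ≤ B (T + 1) * ‖xs - x (T + 1)‖ ^ 2 := by
    refine mul_nonneg ?_ (sq_nonneg _)
    simp only [hB, Nat.add_sub_cancel]; linarith [hsum_nonneg T le_rfl]
  have hbalsum := sum_balanced_le_two_mul (by positivity) (fun t _ => by positivity) hlam
    hlamstar hposstar hbal
  refine (sum_le_add_sum_of_le_sub_add hround hBT).trans ?_
  simp only [hB, mul_div_assoc, ← mul_sum] at hbalsum ⊢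
  simpa using hbalsum

theorem stmt_10 {n T : ℕ} (hT : 1 ≤ T)
    (Ω : Set (EuclideanSpace ℝ (Fin n))) (hΩ : Convex ℝ Ω)
    (R : ℝ) (hR : 0 < R) (hdiam : ∀ x ∈ Ω, ∀ y ∈ Ω, ‖x - y‖ ≤ 2*R)
    (γ δ : ℝ) (hγ : 0 < γ) (hδ : 0 < δ) (H lam : ℕ → ℝ)
    (hHnn : ∀ t ∈ Finset.Icc 1 T, 0 ≤ H t)
    (hHγ : ∀ t ∈ Finset.Icc 1 T, H t ≤ γ)
    (f : ℕ → EuclideanSpace ℝ (Fin n) → ℝ)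
    (x xhat g gtilde : ℕ → EuclideanSpace ℝ (Fin n))
    (hlamrec : ∀ t ∈ Finset.Icc 1 T, lam t =
      (Real.sqrt (((∑ s ∈ Finset.Icc 1 t, H s) + (∑ s ∈ Finset.Icc 1 (t-1), lam s))^2
          + 6 * ‖g t - gtilde t‖^2 / R^2)
        - ((∑ s ∈ Finset.Icc 1 t, H s) + (∑ s ∈ Finset.Icc 1 (t-1), lam s))) / 2)
    (hlamδ : ∀ t ∈ Finset.Icc 1 T, lam t ≤ δ)
    (hpos : ∀ t ∈ Finset.Icc 1 T,
      0 < (∑ s ∈ Finset.Icc 1 t, H s) + (∑ s ∈ Finset.Icc 1 t, lam s))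
    (hx : ∀ t ∈ Finset.Icc 1 (T+1), x t ∈ Ω)
    (hxhat : ∀ t ∈ Finset.Icc 1 T, xhat t ∈ Ω)
    (hsc : ∀ t ∈ Finset.Icc 1 T, ∀ y ∈ Ω,
      f t (xhat t) + ⟪g t, y - xhat t⟫ + (H t / 2) * ‖y - xhat t‖^2 ≤ f t y)
    (hhat : ∀ t ∈ Finset.Icc 1 T, IsMinOn
      (fun z => ⟪gtilde t, z⟫ +
        ((∑ s ∈ Finset.Icc 1 (t-1), H s) + (∑ s ∈ Finset.Icc 1 (t-1), lam s) + γ + δ)/4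
          * ‖z - x t‖^2) Ω (xhat t))
    (hnext : ∀ t ∈ Finset.Icc 1 T, IsMinOn
      (fun z => ⟪g t, z⟫ +
        ((∑ s ∈ Finset.Icc 1 (t-1), H s) + (∑ s ∈ Finset.Icc 1 (t-1), lam s) + γ + δ)/4
          * ‖z - x t‖^2) Ω (x (t+1))) :
    ∀ xs ∈ Ω, ∀ lamstar : ℕ → ℝ,
      (∀ t ∈ Finset.Icc 1 T, 0 ≤ lamstar t) →
      (∀ t ∈ Finset.Icc 1 T,
        0 < (∑ s ∈ Finset.Icc 1 t, H s) + (∑ s ∈ Finset.Icc 1 t, lamstar s)) →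
      ∑ t ∈ Finset.Icc 1 T, (f t (xhat t) - f t xs) ≤
        ((γ + δ)/4) * ‖xs - x 1‖^2
        + 2 * (2*R^2 * (∑ t ∈ Finset.Icc 1 T, lamstar t)
          + 3 * ∑ t ∈ Finset.Icc 1 T, ‖g t - gtilde t‖^2 /
              ((∑ s ∈ Finset.Icc 1 t, H s) + (∑ s ∈ Finset.Icc 1 t, lamstar s))) :=
  stmt_10_general Ω hΩ R hR hdiam γ δ hγ hδ H lam hHnn hHγ f x xhat g gtilde hlamrec hlamδ hpos hx
    hxhat hsc hhat hnext
end

section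
/- Under the hypotheses of the curvature-adaptive optimistic mirror descent theorem with H_t = 0 for all t (general convex losses): let Ω ⊆ ℝ^n be convex with sup_{x,y∈Ω}‖x − y‖ ≤ 2R (R > 0), γ > 0, δ > 0, f_t convex with g_t a subgradient of f_t at x̂_t over Ω, λ_t := (sqrt(λ_{1:t−1}² + 6‖g_t − g̃_t‖²/R²) − λ_{1:t−1})/2 with λ_t ≤ δ and λ_{1:t} > 0 for all t ∈ [T], x̂_t a minimizer over Ω of x ↦ ⟨g̃_t, x⟩ + ((λ_{1:t−1} + γ + δ)/4)‖x − x_t‖², and x_{t+1} a minimizer over Ω of x ↦ ⟨g_t, x⟩ + ((λ_{1:t−1} + γ + δ)/4)‖x − x_t‖². If ∑_{t=1}^T ‖g_t − g̃_t‖² > 0, then for every x* ∈ Ω, ∑_{t=1}^T (f_t(x̂_t) − f_t(x*)) ≤ ((γ + δ)/4)‖x* − x_1‖² + 2·(2R² + 3)·sqrt(∑_{t=1}^T ‖g_t − g̃_t‖²). -/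
open scoped RealInnerProductSpace
open Finset

/-!
Each round consists of two proximal steps from `x t` with the same weight
`β_t = (λ_{1:t-1} + γ + δ) / 4`. The three-point inequality for a proximal step over a convex set,
applied to both steps, bounds the linearized regret `⟪g_t, x̂_t - x*⟫` by the telescoping term
`β_t (‖x* - x_t‖² - ‖x* - x_{t+1}‖²)` plus the optimism error `‖g_t - g̃_t‖² / (4 β_t)`.
The step-size rule makes `λ_t` the positive root of `4 λ (λ_{1:t-1} + λ) = 6 ‖g_t - g̃_t‖² / R²`,
so, as `λ_{1:t} ≤ 4 β_t`, the error is at most `(2R²/3) λ_t`, and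
`λ_{1:T}² ≤ 2 ∑ λ_t λ_{1:t} = 3 ∑ ‖g_t - g̃_t‖² / R²`.
Since `β_t` increases, telescoping against `‖x* - x_t‖² ≤ 4R²` costs `R² λ_{1:T}`, so the regret is
at most `(γ + δ)/4 ‖x* - x_1‖² + (5/3) R² λ_{1:T}`, and
`(5/3) R² λ_{1:T} ≤ (10/3) R √(∑ ‖g_t - g̃_t‖²)` with `(10/3) R ≤ 4R² + 6`.
-/

noncomputable def adaptiveIncrement (a c : ℝ) : ℝ := (√(a ^ 2 + c) - a) / 2

theorem adaptiveIncrement_nonneg (a : ℝ) {c : ℝ} (hc : 0 ≤ c) : 0 ≤ adaptiveIncrement a c := by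
  have : |a| ≤ √(a ^ 2 + c) := Real.abs_le_sqrt (by linarith)
  unfold adaptiveIncrement
  linarith [le_abs_self a]

theorem four_mul_adaptiveIncrement_mul_add (a : ℝ) {c : ℝ} (hc : 0 ≤ c) :
    4 * adaptiveIncrement a c * (a + adaptiveIncrement a c) = c := by
  have := Real.sq_sqrt (show 0 ≤ a ^ 2 + c by positivity)
  unfold adaptiveIncrement
  linear_combination this

theorem sq_sum_Icc_le_two_mul_sum_mul_sum_Icc (a : ℕ → ℝ) (T : ℕ) :
    (∑ t ∈ Icc 1 T, a t) ^ 2 ≤ 2 * ∑ t ∈ Icc 1 T, a t * ∑ s ∈ Icc 1 t, a s := by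
  induction T with
  | zero => simp
  | succ T ih =>
    rw [sum_Icc_succ_top (by omega), sum_Icc_succ_top (by omega), sum_Icc_succ_top (by omega)]
    nlinarith [sq_nonneg (a (T + 1))]

theorem sum_Icc_mul_sub_le {β a : ℕ → ℝ} {M : ℝ} {T : ℕ} (hT : 1 ≤ T)
    (hβ : MonotoneOn β (Set.Icc 1 T)) (ha : ∀ t ∈ Icc 2 T, a t ≤ M) :
    ∑ t ∈ Icc 1 T, β t * (a t - a (t + 1)) ≤
      β 1 * a 1 + (β T - β 1) * M - β T * a (T + 1) := by
  induction T, hT using Nat.le_induction with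
  | base => simp [mul_sub]
  | succ T hT ih =>
    rw [sum_Icc_succ_top (by omega)]
    have hβT : β T ≤ β (T + 1) := hβ ⟨hT, by omega⟩ ⟨by omega, le_rfl⟩ (by omega)
    have haT : a (T + 1) ≤ M := ha (T + 1) (mem_Icc.2 ⟨by omega, le_rfl⟩)
    have := ih (hβ.mono (Set.Icc_subset_Icc_right (by omega)))
      (fun t ht => ha t (Icc_subset_Icc_right (by omega) ht))
    nlinarith [mul_nonneg (sub_nonneg.2 hβT) (sub_nonneg.2 haT)]

section AdaptiveRate

variable {lam c : ℕ → ℝ} {T : ℕ}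

theorem nonneg_of_eq_adaptiveIncrement (hc : ∀ t ∈ Icc 1 T, 0 ≤ c t)
    (hrec : ∀ t ∈ Icc 1 T, lam t = adaptiveIncrement (∑ s ∈ Icc 1 (t - 1), lam s) (c t)) :
    ∀ t ∈ Icc 1 T, 0 ≤ lam t :=
  fun t ht => (hrec t ht) ▸ adaptiveIncrement_nonneg _ (hc t ht)

theorem four_mul_mul_sum_Icc_of_eq_adaptiveIncrement (hc : ∀ t ∈ Icc 1 T, 0 ≤ c t)
    (hrec : ∀ t ∈ Icc 1 T, lam t = adaptiveIncrement (∑ s ∈ Icc 1 (t - 1), lam s) (c t)) :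
    ∀ t ∈ Icc 1 T, 4 * lam t * ∑ s ∈ Icc 1 t, lam s = c t := by
  intro t ht
  obtain ⟨k, rfl⟩ : ∃ k, t = k + 1 := ⟨t - 1, by grind⟩
  have hk := hrec (k + 1) ht
  rw [Nat.add_sub_cancel] at hk
  rw [sum_Icc_succ_top (by omega), hk]
  exact four_mul_adaptiveIncrement_mul_add _ (hc _ ht)

theorem sq_sum_Icc_le_of_eq_adaptiveIncrement (hc : ∀ t ∈ Icc 1 T, 0 ≤ c t)
    (hrec : ∀ t ∈ Icc 1 T, lam t = adaptiveIncrement (∑ s ∈ Icc 1 (t - 1), lam s) (c t)) :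
    (∑ t ∈ Icc 1 T, lam t) ^ 2 ≤ (∑ t ∈ Icc 1 T, c t) / 2 :=
  calc (∑ t ∈ Icc 1 T, lam t) ^ 2 ≤ 2 * ∑ t ∈ Icc 1 T, lam t * ∑ s ∈ Icc 1 t, lam s :=
        sq_sum_Icc_le_two_mul_sum_mul_sum_Icc lam T
    _ = (∑ t ∈ Icc 1 T, c t) / 2 := by
        rw [mul_sum, sum_div]
        refine sum_congr rfl fun t ht => ?_
        linarith [four_mul_mul_sum_Icc_of_eq_adaptiveIncrement hc hrec t ht]

theorem sq_mul_sum_Icc_le_of_eq_adaptiveIncrement {q : ℕ → ℝ} {R : ℝ} (hR : R ≠ 0)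
    (hq : ∀ t ∈ Icc 1 T, 0 ≤ q t)
    (hrec : ∀ t ∈ Icc 1 T,
      lam t = adaptiveIncrement (∑ s ∈ Icc 1 (t - 1), lam s) (6 * q t / R ^ 2)) :
    (R * ∑ t ∈ Icc 1 T, lam t) ^ 2 ≤ 3 * ∑ t ∈ Icc 1 T, q t := by
  have h := sq_sum_Icc_le_of_eq_adaptiveIncrement
    (fun t ht => by have := hq t ht; positivity) hrec
  rw [← sum_div, ← mul_sum, le_div_iff₀ two_pos, le_div_iff₀ (by positivity)] at h
  linarith

end AdaptiveRate

section OptimisticStep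

variable {E : Type*} [NormedAddCommGroup E] [InnerProductSpace ℝ E]

theorem three_point_le_of_isMinOn {Ω : Set E} (hΩ : Convex ℝ Ω) {g x₀ w z : E} {β : ℝ}
    (hw : w ∈ Ω) (hz : z ∈ Ω) (hmin : IsMinOn (fun y => ⟪g, y⟫ + β * ‖y - x₀‖ ^ 2) Ω w) :
    ⟪g, w⟫ + β * ‖w - x₀‖ ^ 2 + β * ‖z - w‖ ^ 2 ≤ ⟪g, z⟫ + β * ‖z - x₀‖ ^ 2 := by
  have hderiv := ((innerSL ℝ g).hasFDerivAt (x := w)).add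
    (((hasFDerivAt_id w).sub_const x₀).norm_sq.const_mul β)
  have hfirst_order : 0 ≤ ⟪g, z - w⟫ + β * (2 * ⟪w - x₀, z - w⟫) := by
    simpa [inner_sub_left] using hmin.localize.hasFDerivWithinAt_nonneg hderiv.hasFDerivWithinAt
      (sub_mem_posTangentConeAt_of_segment_subset (hΩ.segment_subset hw hz))
  rw [show z - x₀ = (w - x₀) + (z - w) by abel, norm_add_sq_real]
  rw [inner_sub_right] at hfirst_order
  linarith

theorem inner_sub_le_of_optimistic_step_s11 {Ω : Set E} (hΩ : Convex ℝ Ω)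
    {g g' x₀ xhat xnext z : E} {β : ℝ} (hβ : 0 < β)
    (hxhat : xhat ∈ Ω) (hxnext : xnext ∈ Ω) (hz : z ∈ Ω)
    (hhat : IsMinOn (fun y => ⟪g', y⟫ + β * ‖y - x₀‖ ^ 2) Ω xhat)
    (hnext : IsMinOn (fun y => ⟪g, y⟫ + β * ‖y - x₀‖ ^ 2) Ω xnext) :
    ⟪g, xhat - z⟫ ≤ β * (‖z - x₀‖ ^ 2 - ‖z - xnext‖ ^ 2) + ‖g - g'‖ ^ 2 / (4 * β) := by
  have hnext_z := three_point_le_of_isMinOn hΩ hxnext hz hnext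
  have hhat_next := three_point_le_of_isMinOn hΩ hxhat hxnext hhat
  have hyoung : ⟪g - g', xhat - xnext⟫ ≤ ‖g - g'‖ ^ 2 / (4 * β) + β * ‖xnext - xhat‖ ^ 2 := by
    rw [norm_sub_rev xnext xhat]
    calc ⟪g - g', xhat - xnext⟫ ≤ ‖g - g'‖ * ‖xhat - xnext‖ := real_inner_le_norm _ _
      _ ≤ _ := by
        rw [div_add' _ _ _ (by positivity), le_div_iff₀ (by positivity)]
        nlinarith [sq_nonneg (‖g - g'‖ - 2 * β * ‖xhat - xnext‖)]
  have hdist : 0 ≤ β * ‖xhat - x₀‖ ^ 2 := by positivity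
  simp only [inner_sub_left, inner_sub_right] at hyoung ⊢
  linarith

theorem sub_le_of_optimistic_round {Ω : Set E} (hΩ : Convex ℝ Ω) {f : E → ℝ}
    {g g' x₀ xhat xnext z : E} {a l γ δ R : ℝ} (ha : 0 ≤ a) (hγ : 0 < γ) (hR : 0 < R)
    (hsub : ∀ y ∈ Ω, f xhat + ⟪g, y - xhat⟫ ≤ f y)
    (hl : l = adaptiveIncrement a (6 * ‖g - g'‖ ^ 2 / R ^ 2)) (hlδ : l ≤ δ)
    (hxhat : xhat ∈ Ω) (hxnext : xnext ∈ Ω) (hz : z ∈ Ω)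
    (hhat : IsMinOn (fun y => ⟪g', y⟫ + (a + γ + δ) / 4 * ‖y - x₀‖ ^ 2) Ω xhat)
    (hnext : IsMinOn (fun y => ⟪g, y⟫ + (a + γ + δ) / 4 * ‖y - x₀‖ ^ 2) Ω xnext) :
    f xhat - f z ≤ (a + γ + δ) / 4 * (‖z - x₀‖ ^ 2 - ‖z - xnext‖ ^ 2) + 2 * R ^ 2 / 3 * l := by
  have hc : 0 ≤ 6 * ‖g - g'‖ ^ 2 / R ^ 2 := by positivity
  have hl_nonneg : 0 ≤ l := hl ▸ adaptiveIncrement_nonneg a hc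
  have hstep := inner_sub_le_of_optimistic_step_s11 hΩ (by linarith) hxhat hxnext hz hhat hnext
  have hrate : ‖g - g'‖ ^ 2 / (4 * ((a + γ + δ) / 4)) ≤ 2 * R ^ 2 / 3 * l := by
    have hl_mul : 4 * l * (a + l) * R ^ 2 = 6 * ‖g - g'‖ ^ 2 := by
      rw [hl, four_mul_adaptiveIncrement_mul_add a hc]
      field_simp
    rw [div_le_iff₀ (by linarith)]
    nlinarith [mul_le_mul_of_nonneg_left (show a + l ≤ a + γ + δ by linarith)
      (by positivity : 0 ≤ l * R ^ 2)]
  have hsub_z := hsub z hz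
  rw [inner_sub_right] at hsub_z hstep
  linarith

end OptimisticStep

theorem stmt_11_general {n T : ℕ} (hT : 1 ≤ T)
    (Ω : Set (EuclideanSpace ℝ (Fin n))) (hΩ : Convex ℝ Ω)
    (R : ℝ) (hR : 0 < R) (hdiam : ∀ x ∈ Ω, ∀ y ∈ Ω, ‖x - y‖ ≤ 2*R)
    (γ δ : ℝ) (hγ : 0 < γ) (hδ : 0 < δ) (lam : ℕ → ℝ)
    (f : ℕ → EuclideanSpace ℝ (Fin n) → ℝ)
    (x xhat g gtilde : ℕ → EuclideanSpace ℝ (Fin n))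
    (hsub : ∀ t ∈ Finset.Icc 1 T, ∀ y ∈ Ω,
      f t (xhat t) + ⟪g t, y - xhat t⟫ ≤ f t y)
    (hlamrec : ∀ t ∈ Finset.Icc 1 T, lam t =
      (Real.sqrt ((∑ s ∈ Finset.Icc 1 (t-1), lam s)^2 + 6 * ‖g t - gtilde t‖^2 / R^2)
        - (∑ s ∈ Finset.Icc 1 (t-1), lam s)) / 2)
    (hlamδ : ∀ t ∈ Finset.Icc 1 T, lam t ≤ δ)
    (hx : ∀ t ∈ Finset.Icc 1 (T+1), x t ∈ Ω)
    (hxhat : ∀ t ∈ Finset.Icc 1 T, xhat t ∈ Ω)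
    (hhat : ∀ t ∈ Finset.Icc 1 T, IsMinOn
      (fun z => ⟪gtilde t, z⟫ +
        ((∑ s ∈ Finset.Icc 1 (t-1), lam s) + γ + δ)/4 * ‖z - x t‖^2) Ω (xhat t))
    (hnext : ∀ t ∈ Finset.Icc 1 T, IsMinOn
      (fun z => ⟪g t, z⟫ +
        ((∑ s ∈ Finset.Icc 1 (t-1), lam s) + γ + δ)/4 * ‖z - x t‖^2) Ω (x (t+1))) :
    ∀ xs ∈ Ω,
      ∑ t ∈ Finset.Icc 1 T, (f t (xhat t) - f t xs) ≤
        ((γ + δ)/4) * ‖xs - x 1‖^2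
        + 2 * (2*R^2 + 3) * Real.sqrt (∑ t ∈ Finset.Icc 1 T, ‖g t - gtilde t‖^2) := by
  intro xs hxs
  have hlam := nonneg_of_eq_adaptiveIncrement (fun _ _ => by positivity) hlamrec
  have hS_mono : ∀ i j, i ≤ j → j ≤ T → ∑ s ∈ Icc 1 i, lam s ≤ ∑ s ∈ Icc 1 j, lam s :=
    fun i j hij hj => sum_le_sum_of_subset_of_nonneg (Icc_subset_Icc_right hij)
      fun s hs _ => hlam s (Icc_subset_Icc_right hj hs)
  have hS_nonneg (t) (ht : t ≤ T) : 0 ≤ ∑ s ∈ Icc 1 t, lam s := by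
    simpa using hS_mono 0 t (Nat.zero_le t) ht
  have hround (t) (ht : t ∈ Icc 1 T) := sub_le_of_optimistic_round hΩ
    (hS_nonneg (t - 1) (by grind)) hγ hR (hsub t ht) (hlamrec t ht) (hlamδ t ht) (hxhat t ht)
    (hx (t + 1) (by grind)) hxs (hhat t ht) (hnext t ht)
  have htele := sum_Icc_mul_sub_le (β := fun t => (∑ s ∈ Icc 1 (t - 1), lam s + γ + δ) / 4)
    (a := fun t => ‖xs - x t‖ ^ 2) (M := (2 * R) ^ 2) hT
    (fun i _ j hj hij => by
      linarith [hS_mono (i - 1) (j - 1) (Nat.sub_le_sub_right hij 1) (by grind)])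
    (fun t ht => pow_le_pow_left₀ (norm_nonneg _) (hdiam xs hxs (x t) (hx t (by grind))) 2)
  rw [show ∑ s ∈ Icc 1 (1 - 1), lam s = 0 by simp] at htele
  have hsum := sum_le_sum hround
  rw [sum_add_distrib, ← mul_sum] at hsum
  have hRS := sq_mul_sum_Icc_le_of_eq_adaptiveIncrement hR.ne'
    (fun t _ => sq_nonneg ‖g t - gtilde t‖) hlamrec
  set S := ∑ t ∈ Icc 1 T, lam t
  set Q := ∑ t ∈ Icc 1 T, ‖g t - gtilde t‖ ^ 2
  have hRS' : R * S ≤ 2 * √Q := by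
    nlinarith [Real.sq_sqrt (show 0 ≤ Q by positivity), Real.sqrt_nonneg Q]
  calc ∑ t ∈ Icc 1 T, (f t (xhat t) - f t xs)
    _ ≤ (γ + δ) / 4 * ‖xs - x 1‖ ^ 2 + 5 / 3 * R ^ 2 * S := by
        nlinarith [mul_le_mul_of_nonneg_left (hS_mono (T - 1) T (Nat.sub_le T 1) le_rfl)
            (sq_nonneg R),
          mul_nonneg (add_nonneg (hS_nonneg (T - 1) (Nat.sub_le T 1)) (by linarith : 0 ≤ γ + δ))
            (sq_nonneg ‖xs - x (T + 1)‖)]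
    _ ≤ (γ + δ) / 4 * ‖xs - x 1‖ ^ 2 + 2 * (2 * R ^ 2 + 3) * √Q := by
        nlinarith [mul_le_mul_of_nonneg_left hRS' hR.le,
          mul_nonneg (Real.sqrt_nonneg Q) (sq_nonneg (R - 5 / 12)), Real.sqrt_nonneg Q]

theorem stmt_11 {n T : ℕ} (hT : 1 ≤ T)
    (Ω : Set (EuclideanSpace ℝ (Fin n))) (hΩ : Convex ℝ Ω)
    (R : ℝ) (hR : 0 < R) (hdiam : ∀ x ∈ Ω, ∀ y ∈ Ω, ‖x - y‖ ≤ 2*R)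
    (γ δ : ℝ) (hγ : 0 < γ) (hδ : 0 < δ) (lam : ℕ → ℝ)
    (f : ℕ → EuclideanSpace ℝ (Fin n) → ℝ)
    (x xhat g gtilde : ℕ → EuclideanSpace ℝ (Fin n))
    (hconv : ∀ t ∈ Finset.Icc 1 T, ConvexOn ℝ Ω (f t))
    (hsub : ∀ t ∈ Finset.Icc 1 T, ∀ y ∈ Ω,
      f t (xhat t) + ⟪g t, y - xhat t⟫ ≤ f t y)
    (hlamrec : ∀ t ∈ Finset.Icc 1 T, lam t =
      (Real.sqrt ((∑ s ∈ Finset.Icc 1 (t-1), lam s)^2 + 6 * ‖g t - gtilde t‖^2 / R^2)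
        - (∑ s ∈ Finset.Icc 1 (t-1), lam s)) / 2)
    (hlamδ : ∀ t ∈ Finset.Icc 1 T, lam t ≤ δ)
    (hpos : ∀ t ∈ Finset.Icc 1 T, 0 < ∑ s ∈ Finset.Icc 1 t, lam s)
    (hx : ∀ t ∈ Finset.Icc 1 (T+1), x t ∈ Ω)
    (hxhat : ∀ t ∈ Finset.Icc 1 T, xhat t ∈ Ω)
    (hhat : ∀ t ∈ Finset.Icc 1 T, IsMinOn
      (fun z => ⟪gtilde t, z⟫ +
        ((∑ s ∈ Finset.Icc 1 (t-1), lam s) + γ + δ)/4 * ‖z - x t‖^2) Ω (xhat t))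
    (hnext : ∀ t ∈ Finset.Icc 1 T, IsMinOn
      (fun z => ⟪g t, z⟫ +
        ((∑ s ∈ Finset.Icc 1 (t-1), lam s) + γ + δ)/4 * ‖z - x t‖^2) Ω (x (t+1)))
    (hQpos : 0 < ∑ t ∈ Finset.Icc 1 T, ‖g t - gtilde t‖^2) :
    ∀ xs ∈ Ω,
      ∑ t ∈ Finset.Icc 1 T, (f t (xhat t) - f t xs) ≤
        ((γ + δ)/4) * ‖xs - x 1‖^2
        + 2 * (2*R^2 + 3) * Real.sqrt (∑ t ∈ Finset.Icc 1 T, ‖g t - gtilde t‖^2) :=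
  stmt_11_general hT Ω hΩ R hR hdiam γ δ hγ hδ lam f x xhat g gtilde hsub hlamrec hlamδ hx hxhat
    hhat hnext
end
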